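/- arXiv:2106.09801 — 6 statements merged into one kernel-verified Lean document; each statement's English description precedes it below -/
import Mathlib

section
/- Let M and N be finite disjoint sets, P a partition of M and Q a partition of N. For every partial bijection S ⊆ P × Q (i.e. (p, q), (p, q') ∈ S implies q = q', and (p, q), (p', q) ∈ S implies p = p'), define G_S = {p ∪ q : (p, q) ∈ S} ∪ {p ∈ P : there is no q with (p, q) ∈ S} ∪ {q ∈ Q : there is no p with (p, q) ∈ S}. Then the map S ↦ G_S is a bijection from the set of partial bijections between P and Q onto the set of coupled partitions P ∪̃ Q. -/
/-- A partition of a set `S`: a family of pairwise disjoint nonempty subsets of `S`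
whose union is `S`. -/
def IsPartitionOf {α : Type*} (S : Set α) (P : Set (Set α)) : Prop :=
  (∀ p ∈ P, p.Nonempty) ∧ (∀ p ∈ P, p ⊆ S) ∧ P.Pairwise Disjoint ∧ ⋃₀ P = S

/-- For disjoint sets `M`, `N` and partitions `P` of `M`, `Q` of `N`, the set of coupled
partitions `P ∪̃ Q`: partitions `G` of `M ∪ N` with `{g ∩ M : g ∈ G} \ {∅} = P` and
`{g ∩ N : g ∈ G} \ {∅} = Q`. -/
def coupledPartitions {α : Type*} (M N : Set α) (P Q : Set (Set α)) :
    Set (Set (Set α)) :=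
  {G | IsPartitionOf (M ∪ N) G ∧
    ((fun g => g ∩ M) '' G) \ {∅} = P ∧ ((fun g => g ∩ N) '' G) \ {∅} = Q}

/-- A partial bijection `S ⊆ P × Q`: `(p, q), (p, q') ∈ S → q = q'` and
`(p, q), (p', q) ∈ S → p = p'`. -/
def IsPartialBij {α : Type*} (P Q : Set (Set α)) (S : Set (Set α × Set α)) : Prop :=
  (∀ s ∈ S, s.1 ∈ P ∧ s.2 ∈ Q) ∧
  (∀ p q q', (p, q) ∈ S → (p, q') ∈ S → q = q') ∧
  (∀ p p' q, (p, q) ∈ S → (p', q) ∈ S → p = p')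

/-! The inverse of `S ↦ G_S` sends a coupled partition `G` to the pairs `(g ∩ M, g ∩ N)` of
its blocks that meet both `M` and `N`. The key point is that a block `g` of `G_S` whose trace
`p = g ∩ M` is nonempty is determined by it: as `S` is a partial bijection, `g ∩ N` is the union
of the at most one partner of `p` in `S`. Hence blocks of `G_S` sharing a point coincide. By the
symmetry exchanging `(M, P)` with `(N, Q)` and swapping the pairs in `S`, it suffices to study
traces on `M`. -/

open Set

section

variable {α : Type*}

theorem inter_union_inter_eq_of_subset {g M N : Set α} (h : g ⊆ M ∪ N) :
    g ∩ M ∪ g ∩ N = g := by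
  rw [← inter_union_distrib_left, inter_eq_left.2 h]

theorem union_inter_eq_left_of_subset_of_disjoint {p q M : Set α} (hp : p ⊆ M)
    (hq : Disjoint q M) : (p ∪ q) ∩ M = p := by
  rw [union_inter_distrib_right, inter_eq_left.2 hp, hq.inter_eq, union_empty]

namespace IsPartitionOf

variable {S M N : Set α} {P : Set (Set α)} {p p' : Set α} {x : α}

theorem nonempty_of_mem (h : IsPartitionOf S P) (hp : p ∈ P) : p.Nonempty := h.1 p hp

theorem subset_of_mem (h : IsPartitionOf S P) (hp : p ∈ P) : p ⊆ S := h.2.1 p hp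

theorem eq_of_mem_of_mem (h : IsPartitionOf S P) (hp : p ∈ P) (hp' : p' ∈ P) (hx : x ∈ p)
    (hx' : x ∈ p') : p = p' :=
  PairwiseDisjoint.elim_set h.2.2.1 hp hp' x hx hx'

theorem exists_mem_of_mem (h : IsPartitionOf S P) (hx : x ∈ S) : ∃ p ∈ P, x ∈ p := by
  rwa [← h.2.2.2, mem_sUnion] at hx

theorem disjoint_of_mem {T : Set α} (h : IsPartitionOf S P) (hST : Disjoint S T) (hp : p ∈ P) :
    Disjoint p T :=
  hST.mono_left (h.subset_of_mem hp)

theorem inter_eq_self_of_mem (h : IsPartitionOf S P) (hp : p ∈ P) : p ∩ S = p :=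
  inter_eq_left.2 (h.subset_of_mem hp)

theorem inter_union_inter_eq (h : IsPartitionOf (M ∪ N) P) (hp : p ∈ P) :
    p ∩ M ∪ p ∩ N = p :=
  inter_union_inter_eq_of_subset (h.subset_of_mem hp)

end IsPartitionOf

variable {M N : Set α} {P Q : Set (Set α)} {S : Set (Set α × Set α)} {G : Set (Set α)}
  {g g' : Set α}

theorem mem_coupledPartitions_swap (hG : G ∈ coupledPartitions M N P Q) :
    G ∈ coupledPartitions N M Q P :=
  ⟨union_comm M N ▸ hG.1, hG.2.2, hG.2.1⟩

theorem IsPartialBij.subset_prod (h : IsPartialBij P Q S) : S ⊆ P ×ˢ Q :=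
  h.1

theorem IsPartialBij.swap (h : IsPartialBij P Q S) : IsPartialBij Q P (Prod.swap ⁻¹' S) :=
  ⟨fun s hs => (h.1 s.swap hs).symm, fun q p p' h₁ h₂ => h.2.2 p p' q h₁ h₂,
    fun q q' p h₁ h₂ => h.2.1 p q q' h₁ h₂⟩

theorem union_inter_eq_left_of_mem (hMN : Disjoint M N) (hP : IsPartitionOf M P)
    (hQ : IsPartitionOf N Q) {p q : Set α} (hp : p ∈ P) (hq : q ∈ Q) :
    (p ∪ q) ∩ M = p :=
  union_inter_eq_left_of_subset_of_disjoint (hP.subset_of_mem hp) (hQ.disjoint_of_mem hMN.symm hq)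

theorem union_inter_eq_right_of_mem (hMN : Disjoint M N) (hP : IsPartitionOf M P)
    (hQ : IsPartitionOf N Q) {p q : Set α} (hp : p ∈ P) (hq : q ∈ Q) :
    (p ∪ q) ∩ N = q := by
  rw [union_comm]
  exact union_inter_eq_left_of_mem hMN.symm hQ hP hq hp

def glue (P Q : Set (Set α)) (S : Set (Set α × Set α)) : Set (Set α) :=
  ((fun s : Set α × Set α => s.1 ∪ s.2) '' S) ∪
    {p ∈ P | ∀ q, (p, q) ∉ S} ∪ {q ∈ Q | ∀ p, (p, q) ∉ S}

def crossingPairs (M N : Set α) (G : Set (Set α)) : Set (Set α × Set α) :=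
  (fun g => (g ∩ M, g ∩ N)) '' {g ∈ G | (g ∩ M).Nonempty ∧ (g ∩ N).Nonempty}

theorem mem_glue : g ∈ glue P Q S ↔ (∃ p q, (p, q) ∈ S ∧ p ∪ q = g) ∨
    (g ∈ P ∧ ∀ q, (g, q) ∉ S) ∨ (g ∈ Q ∧ ∀ p, (p, g) ∉ S) := by
  simp only [glue, mem_union, mem_image, mem_sep_iff, Prod.exists, or_assoc]

theorem glue_swap : glue Q P (Prod.swap ⁻¹' S) = glue P Q S := by
  ext g
  simp only [mem_glue, mem_preimage, Prod.swap_prod_mk]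
  rw [exists_comm]
  simp only [union_comm]
  exact or_congr_right or_comm

theorem swap_mem_crossingPairs {a b : Set α} :
    (b, a) ∈ crossingPairs N M G ↔ (a, b) ∈ crossingPairs M N G := by
  simp only [crossingPairs, mem_image, mem_sep_iff, Prod.mk.injEq]
  grind

theorem inter_left_mem_of_mem_glue (hMN : Disjoint M N) (hP : IsPartitionOf M P)
    (hQ : IsPartitionOf N Q) (hS : S ⊆ P ×ˢ Q) (hg : g ∈ glue P Q S)
    (hne : (g ∩ M).Nonempty) : g ∩ M ∈ P := by
  rcases mem_glue.1 hg with ⟨p, q, h, rfl⟩ | ⟨hgP, -⟩ | ⟨hgQ, -⟩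
  · obtain ⟨hp, hq⟩ := hS h
    rwa [union_inter_eq_left_of_mem hMN hP hQ hp hq]
  · rwa [hP.inter_eq_self_of_mem hgP]
  · rw [(hQ.disjoint_of_mem hMN.symm hgQ).inter_eq] at hne
    exact absurd hne not_nonempty_empty

theorem exists_mem_glue_inter_left_eq (hMN : Disjoint M N) (hP : IsPartitionOf M P)
    (hQ : IsPartitionOf N Q) (hS : S ⊆ P ×ˢ Q) {p : Set α} (hp : p ∈ P) :
    ∃ g ∈ glue P Q S, g ∩ M = p := by
  by_cases hm : ∃ q, (p, q) ∈ S
  · obtain ⟨q, h⟩ := hm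
    exact ⟨p ∪ q, mem_glue.2 (Or.inl ⟨p, q, h, rfl⟩),
      union_inter_eq_left_of_mem hMN hP hQ hp (hS h).2⟩
  · push Not at hm
    exact ⟨p, mem_glue.2 (Or.inr (Or.inl ⟨hp, hm⟩)), hP.inter_eq_self_of_mem hp⟩

theorem inter_right_eq_sUnion_of_mem_glue (hMN : Disjoint M N) (hP : IsPartitionOf M P)
    (hQ : IsPartitionOf N Q) (hS : IsPartialBij P Q S) (hg : g ∈ glue P Q S)
    (hne : (g ∩ M).Nonempty) : g ∩ N = ⋃₀ {q | (g ∩ M, q) ∈ S} := by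
  rcases mem_glue.1 hg with ⟨p, q, h, rfl⟩ | ⟨hgP, hgu⟩ | ⟨hgQ, -⟩
  · obtain ⟨hp, hq⟩ := hS.subset_prod h
    have hpartner : {q' | (p, q') ∈ S} = {q} :=
      eq_singleton_iff_unique_mem.2 ⟨h, fun q' h' => hS.2.1 p q' q h' h⟩
    rw [union_inter_eq_left_of_mem hMN hP hQ hp hq, union_inter_eq_right_of_mem hMN hP hQ hp hq,
      hpartner, sUnion_singleton]
  · rw [hP.inter_eq_self_of_mem hgP, (hP.disjoint_of_mem hMN hgP).inter_eq]
    simp [hgu]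
  · rw [(hQ.disjoint_of_mem hMN.symm hgQ).inter_eq] at hne
    exact absurd hne not_nonempty_empty

theorem subset_union_of_mem_glue (hP : IsPartitionOf M P) (hQ : IsPartitionOf N Q)
    (hS : S ⊆ P ×ˢ Q) (hg : g ∈ glue P Q S) : g ⊆ M ∪ N := by
  rcases mem_glue.1 hg with ⟨p, q, h, rfl⟩ | ⟨hgP, -⟩ | ⟨hgQ, -⟩
  · exact union_subset_union (hP.subset_of_mem (hS h).1) (hQ.subset_of_mem (hS h).2)
  · exact (hP.subset_of_mem hgP).trans subset_union_left
  · exact (hQ.subset_of_mem hgQ).trans subset_union_right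

theorem glue_eq_of_inter_left_eq (hMN : Disjoint M N) (hP : IsPartitionOf M P)
    (hQ : IsPartitionOf N Q) (hS : IsPartialBij P Q S) (hg : g ∈ glue P Q S)
    (hg' : g' ∈ glue P Q S) (hne : (g ∩ M).Nonempty) (heq : g ∩ M = g' ∩ M) : g = g' := by
  have split : ∀ g ∈ glue P Q S, g ∩ M ∪ g ∩ N = g := fun g hg =>
    inter_union_inter_eq_of_subset (subset_union_of_mem_glue hP hQ hS.subset_prod hg)
  rw [← split g hg, ← split g' hg', inter_right_eq_sUnion_of_mem_glue hMN hP hQ hS hg hne,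
    inter_right_eq_sUnion_of_mem_glue hMN hP hQ hS hg' (heq ▸ hne), heq]

theorem glue_eq_of_mem_left (hMN : Disjoint M N) (hP : IsPartitionOf M P)
    (hQ : IsPartitionOf N Q) (hS : IsPartialBij P Q S) (hg : g ∈ glue P Q S)
    (hg' : g' ∈ glue P Q S) {x : α} (hxM : x ∈ M) (hx : x ∈ g) (hx' : x ∈ g') : g = g' :=
  glue_eq_of_inter_left_eq hMN hP hQ hS hg hg' ⟨x, hx, hxM⟩ <| hP.eq_of_mem_of_mem
    (inter_left_mem_of_mem_glue hMN hP hQ hS.subset_prod hg ⟨x, hx, hxM⟩)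
    (inter_left_mem_of_mem_glue hMN hP hQ hS.subset_prod hg' ⟨x, hx', hxM⟩)
    ⟨hx, hxM⟩ ⟨hx', hxM⟩

theorem image_inter_left_glue_diff (hMN : Disjoint M N) (hP : IsPartitionOf M P)
    (hQ : IsPartitionOf N Q) (hS : S ⊆ P ×ˢ Q) :
    (fun g => g ∩ M) '' glue P Q S \ {∅} = P := by
  ext p
  constructor
  · rintro ⟨⟨g, hg, rfl⟩, hne⟩
    exact inter_left_mem_of_mem_glue hMN hP hQ hS hg (nonempty_iff_ne_empty.2 hne)
  · intro hp
    exact ⟨exists_mem_glue_inter_left_eq hMN hP hQ hS hp, (hP.nonempty_of_mem hp).ne_empty⟩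

theorem glue_mem_coupledPartitions (hMN : Disjoint M N) (hP : IsPartitionOf M P)
    (hQ : IsPartitionOf N Q) (hS : IsPartialBij P Q S) :
    glue P Q S ∈ coupledPartitions M N P Q := by
  have hSPQ : S ⊆ P ×ˢ Q := hS.subset_prod
  have hSQP : Prod.swap ⁻¹' S ⊆ Q ×ˢ P := hS.swap.subset_prod
  refine ⟨⟨fun g hg => ?_, fun g hg => subset_union_of_mem_glue hP hQ hSPQ hg,
    fun g hg g' hg' hne => ?_, ?_⟩, image_inter_left_glue_diff hMN hP hQ hSPQ,
    glue_swap (S := S) ▸ image_inter_left_glue_diff hMN.symm hQ hP hSQP⟩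
  · rcases mem_glue.1 hg with ⟨p, q, h, rfl⟩ | ⟨hgP, -⟩ | ⟨hgQ, -⟩
    · exact (hP.nonempty_of_mem (hSPQ h).1).mono subset_union_left
    · exact hP.nonempty_of_mem hgP
    · exact hQ.nonempty_of_mem hgQ
  · refine disjoint_left.2 fun x hx hx' => hne ?_
    rcases subset_union_of_mem_glue hP hQ hSPQ hg hx with hxM | hxN
    · exact glue_eq_of_mem_left hMN hP hQ hS hg hg' hxM hx hx'
    · rw [← glue_swap] at hg hg'
      exact glue_eq_of_mem_left hMN.symm hQ hP hS.swap hg hg' hxN hx hx'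
  · refine (sUnion_subset fun g hg => subset_union_of_mem_glue hP hQ hSPQ hg).antisymm ?_
    rintro x (hx | hx)
    · obtain ⟨p, hp, hxp⟩ := hP.exists_mem_of_mem hx
      obtain ⟨g, hg, rfl⟩ := exists_mem_glue_inter_left_eq hMN hP hQ hSPQ hp
      exact ⟨g, hg, hxp.1⟩
    · obtain ⟨q, hq, hxq⟩ := hQ.exists_mem_of_mem hx
      obtain ⟨g, hg, rfl⟩ := exists_mem_glue_inter_left_eq hMN.symm hQ hP hSQP hq
      rw [glue_swap] at hg
      exact ⟨g, hg, hxq.1⟩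

theorem crossingPairs_glue (hMN : Disjoint M N) (hP : IsPartitionOf M P)
    (hQ : IsPartitionOf N Q) (hS : S ⊆ P ×ˢ Q) :
    crossingPairs M N (glue P Q S) = S := by
  ext ⟨a, b⟩
  constructor
  · rintro ⟨g, ⟨hg, hgM, hgN⟩, hab⟩
    rcases mem_glue.1 hg with ⟨p, q, h, rfl⟩ | ⟨hgP, -⟩ | ⟨hgQ, -⟩
    · obtain ⟨hp, hq⟩ := hS h
      dsimp only at hab
      rw [union_inter_eq_left_of_mem hMN hP hQ hp hq,
        union_inter_eq_right_of_mem hMN hP hQ hp hq] at hab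
      rwa [← hab]
    · rw [(hP.disjoint_of_mem hMN hgP).inter_eq] at hgN
      exact absurd hgN not_nonempty_empty
    · rw [(hQ.disjoint_of_mem hMN.symm hgQ).inter_eq] at hgM
      exact absurd hgM not_nonempty_empty
  · intro h
    obtain ⟨ha, hb⟩ := hS h
    have hM := union_inter_eq_left_of_mem hMN hP hQ ha hb
    have hN := union_inter_eq_right_of_mem hMN hP hQ ha hb
    exact ⟨a ∪ b, ⟨mem_glue.2 (Or.inl ⟨a, b, h, rfl⟩), hM ▸ hP.nonempty_of_mem ha,
      hN ▸ hQ.nonempty_of_mem hb⟩, by simp only [hM, hN]⟩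

theorem snd_eq_of_mem_crossingPairs {T : Set α} (hG : IsPartitionOf T G) {a b b' : Set α}
    (h : (a, b) ∈ crossingPairs M N G) (h' : (a, b') ∈ crossingPairs M N G) : b = b' := by
  obtain ⟨g, ⟨hg, ⟨x, hx⟩, -⟩, hab⟩ := h
  obtain ⟨g', ⟨hg', -⟩, hab'⟩ := h'
  simp only [Prod.mk.injEq] at hab hab'
  have hx' : x ∈ g' ∩ M := hab'.1 ▸ hab.1 ▸ hx
  rw [← hab.2, ← hab'.2, hG.eq_of_mem_of_mem hg hg' hx.1 hx'.1]

theorem isPartialBij_crossingPairs (hG : G ∈ coupledPartitions M N P Q) :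
    IsPartialBij P Q (crossingPairs M N G) := by
  refine ⟨?_, fun p q q' h h' => snd_eq_of_mem_crossingPairs hG.1 h h', fun p p' q h h' => ?_⟩
  · rintro _ ⟨g, ⟨hg, hgM, hgN⟩, rfl⟩
    exact ⟨hG.2.1 ▸ ⟨mem_image_of_mem _ hg, hgM.ne_empty⟩,
      hG.2.2 ▸ ⟨mem_image_of_mem _ hg, hgN.ne_empty⟩⟩
  · exact snd_eq_of_mem_crossingPairs hG.1 (swap_mem_crossingPairs.2 h)
      (swap_mem_crossingPairs.2 h')

theorem image_union_crossingPairs (hG : IsPartitionOf (M ∪ N) G) :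
    (fun s : Set α × Set α => s.1 ∪ s.2) '' crossingPairs M N G =
      {g ∈ G | (g ∩ M).Nonempty ∧ (g ∩ N).Nonempty} := by
  rw [crossingPairs, image_image]
  exact (image_congr fun g hg => hG.inter_union_inter_eq hg.1).trans (image_id' _)

theorem sep_forall_not_mem_crossingPairs (hG : G ∈ coupledPartitions M N P Q) :
    {p ∈ P | ∀ q, (p, q) ∉ crossingPairs M N G} = {g ∈ G | g ∩ N = ∅} := by
  ext p
  constructor
  · rintro ⟨hp, hu⟩
    rw [← hG.2.1] at hp
    obtain ⟨⟨g, hg, rfl⟩, hne⟩ := hp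
    dsimp only at hu hne ⊢
    have hgN : g ∩ N = ∅ := by
      by_contra h
      exact hu (g ∩ N)
        ⟨g, ⟨hg, nonempty_iff_ne_empty.2 hne, nonempty_iff_ne_empty.2 h⟩, rfl⟩
    have hgM : g ∩ M = g := by
      simpa [hgN] using hG.1.inter_union_inter_eq hg
    rw [hgM]
    exact ⟨hg, hgN⟩
  · rintro ⟨hp, hpN⟩
    have hpM : p ∩ M = p := by
      simpa [hpN] using hG.1.inter_union_inter_eq hp
    refine ⟨hG.2.1 ▸ ⟨⟨p, hp, hpM⟩, (hG.1.nonempty_of_mem hp).ne_empty⟩, ?_⟩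
    obtain ⟨x, hx⟩ := hG.1.nonempty_of_mem hp
    rintro q ⟨g, ⟨hg, -, hgN⟩, hgp⟩
    simp only [Prod.mk.injEq] at hgp
    have hxg : x ∈ g := (hgp.1 ▸ hpM.symm ▸ hx : x ∈ g ∩ M).1
    rw [hG.1.eq_of_mem_of_mem hg hp hxg hx, hpN] at hgN
    exact not_nonempty_empty hgN

theorem glue_crossingPairs (hG : G ∈ coupledPartitions M N P Q) :
    glue P Q (crossingPairs M N G) = G := by
  have hright : {q ∈ Q | ∀ p, (p, q) ∉ crossingPairs M N G} = {g ∈ G | g ∩ M = ∅} := by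
    rw [← sep_forall_not_mem_crossingPairs (mem_coupledPartitions_swap hG)]
    ext q
    exact and_congr_right fun _ =>
      forall_congr' fun p => not_congr swap_mem_crossingPairs.symm
  rw [glue, image_union_crossingPairs hG.1, sep_forall_not_mem_crossingPairs hG, hright]
  ext g
  simp only [mem_union, mem_sep_iff]
  refine ⟨fun h => by rcases h with (h | h) | h <;> exact h.1, fun hg => ?_⟩
  rcases (g ∩ M).eq_empty_or_nonempty with hM | hM
  · exact Or.inr ⟨hg, hM⟩
  rcases (g ∩ N).eq_empty_or_nonempty with hN | hN
  · exact Or.inl (Or.inr ⟨hg, hN⟩)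
  · exact Or.inl (Or.inl ⟨hg, hM, hN⟩)

end

theorem stmt_1_general {α : Type*} (M N : Set α)
    (hMN : Disjoint M N) (P Q : Set (Set α))
    (hP : IsPartitionOf M P) (hQ : IsPartitionOf N Q) :
    Set.BijOn
      (fun S : Set (Set α × Set α) =>
        ((fun s : Set α × Set α => s.1 ∪ s.2) '' S) ∪
          {p ∈ P | ∀ q, (p, q) ∉ S} ∪ {q ∈ Q | ∀ p, (p, q) ∉ S})
      {S | IsPartialBij P Q S}
      (coupledPartitions M N P Q) :=
  InvOn.bijOn (f := glue P Q) (f' := crossingPairs M N)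
    ⟨fun _ hS => crossingPairs_glue hMN hP hQ hS.subset_prod, fun _ hG => glue_crossingPairs hG⟩
    (fun _ hS => glue_mem_coupledPartitions hMN hP hQ hS)
    (fun _ hG => isPartialBij_crossingPairs hG)

/-- The map `S ↦ G_S = {p ∪ q : (p,q) ∈ S} ∪ {unmatched p ∈ P} ∪ {unmatched q ∈ Q}` is a
bijection from the set of partial bijections between `P` and `Q` onto the set of coupled
partitions `P ∪̃ Q`. -/
theorem stmt_1 {α : Type*} (M N : Set α) (hM : M.Finite) (hN : N.Finite)
    (hMN : Disjoint M N) (P Q : Set (Set α))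
    (hP : IsPartitionOf M P) (hQ : IsPartitionOf N Q) :
    Set.BijOn
      (fun S : Set (Set α × Set α) =>
        ((fun s : Set α × Set α => s.1 ∪ s.2) '' S) ∪
          {p ∈ P | ∀ q, (p, q) ∉ S} ∪ {q ∈ Q | ∀ p, (p, q) ∉ S})
      {S | IsPartialBij P Q S}
      (coupledPartitions M N P Q) :=
  stmt_1_general M N hMN P Q hP hQ
end

section
/- Every Lions forest is isomorphic — via a bijection of node sets carrying edges to edges, labels to labels, the h0-hyperedge to the h0-hyperedge and the partition H to the partition H — to a Lions forest lying in the smallest class 𝒞 of Lions forests that contains every single-node Lions tree ({x}, ∅, {x}, ∅, x ↦ i) for i ∈ {1, …, d}, and is closed under the operations: T1 ⊛ T2 for T1, T2 ∈ 𝒞 with disjoint node sets; 𝓔[T] for T ∈ 𝒞; and ⌊T⌋_i for T ∈ 𝒞, i ∈ {1, …, d} and any choice of new node x0 outside the node set of T. -/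
/-- A Lions forest over node type `V` with labels in `{1, …, d}` (encoded as `Fin d`).
The data consists of a finite nonempty node set `N`, a set of directed edges `E` pointing
towards the roots, a distinguished hyperedge `h0 ⊆ N`, a partition `H` of `N \ h0`,
a labelling `L`, together with the depth function (number of edges on the path to the root),
subject to the structural conditions (i), (ii), (iii) of a Lions forest. -/
structure LionsForest (V : Type*) (d : ℕ) where
  N : Set V
  E : Set (V × V)
  h0 : Set V
  H : Set (Set V)
  L : V → Fin d
  depth : V → ℕ
  finite_N : N.Finite
  nonempty_N : N.Nonempty
  mem_of_edge : ∀ x y : V, (x, y) ∈ E → x ∈ N ∧ y ∈ N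
  edge_unique : ∀ x y z : V, (x, y) ∈ E → (x, z) ∈ E → y = z
  h0_subset : h0 ⊆ N
  H_partition : IsPartitionOf (N \ h0) H
  depth_root : ∀ x ∈ N, (∀ y, (x, y) ∉ E) → depth x = 0
  depth_edge : ∀ x y : V, (x, y) ∈ E → depth x = depth y + 1
  h0_root : h0.Nonempty → ∃ x ∈ h0, ∀ y, (x, y) ∉ E
  hyper_parent : ∀ h ∈ insert h0 H \ {(∅ : Set V)}, ∀ x ∈ h, ∀ y ∈ h,
    depth x < depth y → ∀ z, (y, z) ∈ E → z ∈ h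
  hyper_sibling : ∀ h ∈ insert h0 H \ {(∅ : Set V)}, ∀ x₁ ∈ h, ∀ y₁ ∈ h,
    depth x₁ = depth y₁ → ∀ x₂ y₂, (x₁, x₂) ∈ E → (y₁, y₂) ∈ E → x₂ ≠ y₂ →
      x₂ ∈ h ∧ y₂ ∈ h

/-- The smallest class of Lions forests (over node type `V`, with labels in `Fin d`)
containing every single-node Lions tree `({x}, ∅, {x}, ∅, x ↦ i)`, and closed under the
product `⊛` of forests with disjoint node sets, the integration operator `𝓔`, and the
grafting operators `⌊·⌋ᵢ` (for any choice of new node `x0`). -/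
inductive InGenClass {V : Type*} {d : ℕ} : LionsForest V d → Prop
  | single (T : LionsForest V d) (x : V) (i : Fin d)
      (hN : T.N = {x}) (hE : T.E = ∅) (hh0 : T.h0 = {x}) (hH : T.H = ∅)
      (hL : T.L x = i) : InGenClass T
  | prod (T T1 T2 : LionsForest V d) :
      InGenClass T1 → InGenClass T2 → Disjoint T1.N T2.N →
      T.N = T1.N ∪ T2.N → T.E = T1.E ∪ T2.E → T.h0 = T1.h0 ∪ T2.h0 →
      T.H = T1.H ∪ T2.H →
      (∀ x ∈ T1.N, T.L x = T1.L x) → (∀ x ∈ T2.N, T.L x = T2.L x) → InGenClass T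
  | integ (T T' : LionsForest V d) :
      InGenClass T' →
      T.N = T'.N → T.E = T'.E → T.h0 = ∅ →
      T.H = insert T'.h0 T'.H \ {(∅ : Set V)} →
      (∀ x ∈ T'.N, T.L x = T'.L x) → InGenClass T
  | graft (T T' : LionsForest V d) (x0 : V) (i : Fin d) :
      InGenClass T' → x0 ∉ T'.N →
      T.N = insert x0 T'.N →
      T.E = T'.E ∪ {e : V × V | e.1 ∈ T'.N ∧ (∀ y, (e.1, y) ∉ T'.E) ∧ e.2 = x0} →
      T.h0 = insert x0 T'.h0 → T.H = T'.H →
      (∀ x ∈ T'.N, T.L x = T'.L x) → T.L x0 = i → InGenClass T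

/-- An isomorphism of Lions forests: a bijection of node sets carrying edges to edges,
labels to labels, the `h0`-hyperedge to the `h0`-hyperedge and the partition `H` to the
partition `H`. -/
def LFIso {V W : Type*} {d : ℕ} (T : LionsForest V d) (T' : LionsForest W d) : Prop :=
  ∃ φ : V → W,
    Set.BijOn φ T.N T'.N ∧
    (∀ x ∈ T.N, ∀ y ∈ T.N, ((x, y) ∈ T.E ↔ (φ x, φ y) ∈ T'.E)) ∧
    (∀ x ∈ T.N, T'.L (φ x) = T.L x) ∧
    φ '' T.h0 = T'.h0 ∧
    (Set.image φ) '' T.H = T'.H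

/-!
In fact every Lions forest lies in the class itself, so the identity is the isomorphism.
Induct on the number of nodes. If `h0 = ∅`, promoting the block of `H` that contains a root
to `h0` exhibits `T` as `𝓔` of a forest with the same nodes and `h0 ≠ ∅`. Otherwise `h0`
contains a root `r`: if `T` is the tree of `r`, it is either the single node `r` or the grafting
of the forest obtained by deleting `r`; if not, `T` is the product of the tree of `r` and the
remaining trees. The product step needs that no block of `H` meets the tree of `r`: conditions
(ii) and (iii) force a hyperedge meeting two trees to contain both roots, while `r ∈ h0`.
-/

namespace IsPartitionOf

variable {α : Type*} {S : Set α} {P : Set (Set α)}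

lemma sep (hP : IsPartitionOf S P) {p : α → Prop}
    (hp : ∀ s ∈ P, ∀ x ∈ s, ∀ y ∈ s, p x → p y) :
    IsPartitionOf {x ∈ S | p x} {s ∈ P | ∀ x ∈ s, p x} := by
  obtain ⟨hne, hsub, hdisj, hunion⟩ := hP
  refine ⟨fun s hs => hne s hs.1, fun s hs x hx => ⟨hsub s hs.1 hx, hs.2 x hx⟩,
    hdisj.mono (Set.sep_subset _ _), ?_⟩
  ext x
  constructor
  · rintro ⟨s, hs, hx⟩
    exact ⟨hsub s hs.1 hx, hs.2 x hx⟩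
  · rintro ⟨hxS, hpx⟩
    rw [← hunion] at hxS
    obtain ⟨s, hs, hxs⟩ := hxS
    exact ⟨s, ⟨hs, fun y hy => hp s hs x hxs y hy hpx⟩, hxs⟩

lemma sdiff_of_mem (hP : IsPartitionOf S P) {b : Set α} (hb : b ∈ P) :
    IsPartitionOf (S \ b) (P \ {b}) := by
  obtain ⟨hne, hsub, hdisj, hunion⟩ := hP
  have hsub' : ∀ s ∈ P \ {b}, s ⊆ S \ b := fun s hs x hx =>
    ⟨hsub s hs.1 hx, Set.disjoint_left.mp (hdisj hs.1 hb hs.2) hx⟩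
  refine ⟨fun s hs => hne s hs.1, hsub', hdisj.mono Set.sdiff_subset, ?_⟩
  refine Set.Subset.antisymm (Set.sUnion_subset hsub') ?_
  rintro x ⟨hxS, hxb⟩
  rw [← hunion] at hxS
  obtain ⟨s, hs, hxs⟩ := hxS
  exact ⟨s, ⟨hs, fun hsb => hxb (hsb ▸ hxs)⟩, hxs⟩

end IsPartitionOf

namespace LionsForest

variable {V : Type*} {d : ℕ} {T : LionsForest V d}

def hyperedges_s4 (T : LionsForest V d) : Set (Set V) := insert T.h0 T.H \ {∅}

lemma nonempty_of_mem_H {b : Set V} (hb : b ∈ T.H) : b.Nonempty := T.H_partition.1 b hb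

lemma empty_notMem_H : (∅ : Set V) ∉ T.H := fun h => (nonempty_of_mem_H h).ne_empty rfl

lemma h0_mem_hyperedges (h : T.h0.Nonempty) : T.h0 ∈ T.hyperedges_s4 :=
  ⟨Set.mem_insert _ _, h.ne_empty⟩

lemma mem_hyperedges_of_mem_H {b : Set V} (hb : b ∈ T.H) : b ∈ T.hyperedges_s4 :=
  ⟨Set.mem_insert_of_mem _ hb, (nonempty_of_mem_H hb).ne_empty⟩

lemma H_eq_insert_sdiff {b : Set V} (hb : b ∈ T.H) : T.H = insert b (T.H \ {b}) \ {∅} := by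
  rw [Set.insert_sdiff_self_of_mem hb, Set.sdiff_singleton_eq_self empty_notMem_H]

lemma hyperedges_eq_H (h0e : T.h0 = ∅) : T.hyperedges_s4 = T.H := by
  rw [hyperedges_s4, h0e, Set.insert_sdiff_of_mem _ (Set.mem_singleton _), Set.sdiff_singleton_eq_self empty_notMem_H]

lemma depth_pos_of_edge {x y : V} (h : (x, y) ∈ T.E) : 0 < T.depth x := by
  rw [T.depth_edge x y h]
  exact Nat.succ_pos _

open Classical in
noncomputable def par (T : LionsForest V d) (x : V) : V :=
  if h : ∃ y, (x, y) ∈ T.E then h.choose else x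

lemma par_eq_of_edge {x y : V} (h : (x, y) ∈ T.E) : T.par x = y := by
  have hex : ∃ y, (x, y) ∈ T.E := ⟨y, h⟩
  rw [par, dif_pos hex]
  exact T.edge_unique x _ y hex.choose_spec h

lemma edge_par {x : V} (hx : x ∈ T.N) (h : 0 < T.depth x) : (x, T.par x) ∈ T.E := by
  by_contra hne
  have hnoe : ∀ y, (x, y) ∉ T.E := fun y hy => hne (par_eq_of_edge hy ▸ hy)
  exact h.ne' (T.depth_root x hx hnoe)

lemma par_mem {x : V} (hx : x ∈ T.N) (h : 0 < T.depth x) : T.par x ∈ T.N :=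
  (T.mem_of_edge _ _ (edge_par hx h)).2

lemma depth_par {x : V} (hx : x ∈ T.N) (h : 0 < T.depth x) :
    T.depth (T.par x) + 1 = T.depth x :=
  (T.depth_edge _ _ (edge_par hx h)).symm

lemma iterate_par_mem {x : V} (hx : x ∈ T.N) {k : ℕ} (hk : k ≤ T.depth x) :
    T.par^[k] x ∈ T.N ∧ T.depth (T.par^[k] x) = T.depth x - k := by
  induction k with
  | zero => exact ⟨hx, rfl⟩
  | succ k ih =>
    obtain ⟨hmem, hdepth⟩ := ih (by omega)
    have hpos : 0 < T.depth (T.par^[k] x) := by omega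
    rw [Function.iterate_succ_apply']
    exact ⟨par_mem hmem hpos, by have := depth_par hmem hpos; omega⟩

noncomputable def rootOf (T : LionsForest V d) (x : V) : V := T.par^[T.depth x] x

lemma rootOf_mem {x : V} (hx : x ∈ T.N) : T.rootOf x ∈ T.N :=
  (iterate_par_mem hx le_rfl).1

lemma depth_rootOf {x : V} (hx : x ∈ T.N) : T.depth (T.rootOf x) = 0 := by
  rw [rootOf, (iterate_par_mem hx le_rfl).2, Nat.sub_self]

lemma rootOf_of_depth_eq_zero {x : V} (h : T.depth x = 0) : T.rootOf x = x := by
  rw [rootOf, h, Function.iterate_zero_apply]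

lemma rootOf_rootOf {x : V} (hx : x ∈ T.N) : T.rootOf (T.rootOf x) = T.rootOf x :=
  rootOf_of_depth_eq_zero (depth_rootOf hx)

lemma depth_pos_of_rootOf_ne {x : V} (h : T.rootOf x ≠ x) : 0 < T.depth x :=
  Nat.pos_of_ne_zero fun h0 => h (rootOf_of_depth_eq_zero h0)

lemma rootOf_par {x : V} (hx : x ∈ T.N) (h : 0 < T.depth x) :
    T.rootOf (T.par x) = T.rootOf x := by
  rw [rootOf, rootOf, ← depth_par hx h, Function.iterate_succ_apply]

lemma rootOf_eq_of_edge {x y : V} (h : (x, y) ∈ T.E) : T.rootOf x = T.rootOf y := by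
  rw [← rootOf_par (T.mem_of_edge x y h).1 (depth_pos_of_edge h), par_eq_of_edge h]

lemma not_edge_rootOf {x : V} (hx : x ∈ T.N) (y : V) : (T.rootOf x, y) ∉ T.E :=
  fun h => (depth_pos_of_edge h).ne' (depth_rootOf hx)

lemma subset_N_of_mem_hyperedges {h : Set V} (hh : h ∈ T.hyperedges_s4) : h ⊆ T.N := by
  rcases hh.1 with rfl | hH
  · exact T.h0_subset
  · exact (T.H_partition.2.1 h hH).trans Set.sdiff_subset

lemma iterate_par_mem_of_mem_hyperedges {h : Set V} (hh : h ∈ T.hyperedges_s4) {x y : V}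
    (hx : x ∈ h) (hy : y ∈ h) {k : ℕ} (hk : T.depth x + k ≤ T.depth y) :
    T.par^[k] y ∈ h := by
  induction k with
  | zero => exact hy
  | succ k ih =>
    have hyN := subset_N_of_mem_hyperedges hh hy
    have hdepth := (iterate_par_mem hyN (k := k) (by omega)).2
    rw [Function.iterate_succ_apply']
    exact T.hyper_parent h hh x hx _ (ih (by omega)) (by omega) _
      (edge_par (iterate_par_mem hyN (by omega)).1 (by omega))

lemma rootOf_mem_h0 {y : V} (hy : y ∈ T.h0) : T.rootOf y ∈ T.h0 := by
  obtain ⟨r, hr, hroot⟩ := T.h0_root ⟨y, hy⟩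
  have hr0 : T.depth r = 0 := T.depth_root r (T.h0_subset hr) hroot
  exact iterate_par_mem_of_mem_hyperedges (h0_mem_hyperedges ⟨y, hy⟩) hr hy (by omega)

/-- Conditions (ii) and (iii) let one walk up from `x` and `y` inside `h`, one step at a time,
until the two paths reach their distinct roots. -/
lemma rootOf_mem_of_mem_hyperedges {h : Set V} (hh : h ∈ T.hyperedges_s4) {x y : V}
    (hx : x ∈ h) (hy : y ∈ h) (hne : T.rootOf x ≠ T.rootOf y) : T.rootOf x ∈ h := by
  have hxN := subset_N_of_mem_hyperedges hh hx
  have hyN := subset_N_of_mem_hyperedges hh hy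
  rcases Nat.lt_or_ge (T.depth x) (T.depth y) with hlt | hge
  · have hypos : 0 < T.depth y := by omega
    have hpar : T.par y ∈ h := T.hyper_parent h hh x hx y hy hlt _ (edge_par hyN hypos)
    have := depth_par hyN hypos
    exact rootOf_mem_of_mem_hyperedges hh hx hpar (by rwa [rootOf_par hyN hypos])
  · rcases Nat.eq_zero_or_pos (T.depth x) with hx0 | hxpos
    · rwa [rootOf_of_depth_eq_zero hx0]
    have hpar : T.par x ∈ h := by
      rcases Nat.lt_or_ge (T.depth y) (T.depth x) with hlt | hle
      · exact T.hyper_parent h hh y hy x hx hlt _ (edge_par hxN hxpos)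
      · have hypos : 0 < T.depth y := by omega
        refine (T.hyper_sibling h hh x hx y hy (by omega) _ _ (edge_par hxN hxpos)
          (edge_par hyN hypos) fun hpar => hne ?_).1
        rw [← rootOf_par hxN hxpos, hpar, rootOf_par hyN hypos]
    have := depth_par hxN hxpos
    rw [← rootOf_par hxN hxpos] at hne ⊢
    exact rootOf_mem_of_mem_hyperedges hh hpar hy hne
termination_by T.depth x + T.depth y

def SeparatesH (T : LionsForest V d) (P : V → Prop) : Prop :=
  ∀ h ∈ T.H, ∀ x ∈ h, ∀ y ∈ h, P (T.rootOf x) → P (T.rootOf y)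

lemma SeparatesH.not {P : V → Prop} (hP : T.SeparatesH P) : T.SeparatesH fun v => ¬P v :=
  fun h hh x hx y hy hPx hPy => hPx (hP h hh y hy x hx hPy)

/-- A block of `H` is disjoint from `h0`, so it cannot contain a root lying in `h0`. -/
lemma separatesH_eq {r : V} (hr : r ∈ T.h0) : T.SeparatesH (· = r) := by
  intro h hh x hx y hy hxr
  by_contra hyr
  have hmem := rootOf_mem_of_mem_hyperedges (mem_hyperedges_of_mem_H hh) hx hy
    (by rw [hxr]; exact Ne.symm hyr)
  rw [hxr] at hmem
  exact (T.H_partition.2.1 h hh hmem).2 hr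

/-- `T` is the product `⊛` of `T.restrict P` and `T.restrict (¬P ·)`. -/
noncomputable def restrict (T : LionsForest V d) (P : V → Prop)
    (hne : ∃ x ∈ T.N, P (T.rootOf x)) (hP : T.SeparatesH P) : LionsForest V d where
  N := {x ∈ T.N | P (T.rootOf x)}
  E := {e ∈ T.E | P (T.rootOf e.1)}
  h0 := {x ∈ T.h0 | P (T.rootOf x)}
  H := {h ∈ T.H | ∀ x ∈ h, P (T.rootOf x)}
  L := T.L
  depth := T.depth
  finite_N := T.finite_N.subset (Set.sep_subset _ _)
  nonempty_N := hne
  mem_of_edge := by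
    rintro x y ⟨he, hPx⟩
    obtain ⟨hx, hy⟩ := T.mem_of_edge x y he
    exact ⟨⟨hx, hPx⟩, hy, rootOf_eq_of_edge he ▸ hPx⟩
  edge_unique x y z hy hz := T.edge_unique x y z hy.1 hz.1
  h0_subset x hx := ⟨T.h0_subset hx.1, hx.2⟩
  H_partition := by
    convert T.H_partition.sep hP using 1
    ext x
    simp only [Set.mem_sdiff, Set.mem_ofPred_eq]
    tauto
  depth_root x hx hnoe := T.depth_root x hx.1 fun y hy => hnoe y ⟨hy, hx.2⟩
  depth_edge x y he := T.depth_edge x y he.1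
  h0_root := by
    rintro ⟨y, hy, hPy⟩
    have hyN := T.h0_subset hy
    refine ⟨T.rootOf y, ⟨rootOf_mem_h0 hy, ?_⟩, fun z hz => not_edge_rootOf hyN z hz.1⟩
    rwa [rootOf_rootOf hyN]
  hyper_parent := by
    rintro h ⟨rfl | ⟨hh, -⟩, -⟩ x hx y hy hlt z ⟨hz, -⟩
    · exact ⟨T.hyper_parent _ (h0_mem_hyperedges ⟨x, hx.1⟩) x hx.1 y hy.1 hlt z hz,
        rootOf_eq_of_edge hz ▸ hy.2⟩
    · exact T.hyper_parent h (mem_hyperedges_of_mem_H hh) x hx y hy hlt z hz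
  hyper_sibling := by
    rintro h ⟨rfl | ⟨hh, -⟩, -⟩ x₁ hx₁ y₁ hy₁ hdepth x₂ y₂ ⟨hx, -⟩ ⟨hy, -⟩ hxy
    · obtain ⟨h₁, h₂⟩ := T.hyper_sibling _ (h0_mem_hyperedges ⟨x₁, hx₁.1⟩) x₁ hx₁.1 y₁ hy₁.1
        hdepth x₂ y₂ hx hy hxy
      exact ⟨⟨h₁, rootOf_eq_of_edge hx ▸ hx₁.2⟩, ⟨h₂, rootOf_eq_of_edge hy ▸ hy₁.2⟩⟩
    · exact T.hyper_sibling h (mem_hyperedges_of_mem_H hh) x₁ hx₁ y₁ hy₁ hdepth x₂ y₂ hx hy hxy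

lemma ncard_restrict_lt {P : V → Prop} (hne : ∃ x ∈ T.N, P (T.rootOf x))
    (hP : T.SeparatesH P) (hnot : ∃ x ∈ T.N, ¬P (T.rootOf x)) :
    (T.restrict P hne hP).N.ncard < T.N.ncard := by
  obtain ⟨x, hx, hPx⟩ := hnot
  exact Set.ncard_lt_ncard ⟨Set.sep_subset _ _, fun hsub => hPx (hsub hx).2⟩ T.finite_N

lemma inGenClass_of_restrict {P : V → Prop} (hP : T.SeparatesH P)
    (hne : ∃ x ∈ T.N, P (T.rootOf x)) (hne' : ∃ x ∈ T.N, ¬P (T.rootOf x))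
    (h₁ : InGenClass (T.restrict P hne hP)) (h₂ : InGenClass (T.restrict _ hne' hP.not)) :
    InGenClass T := by
  refine InGenClass.prod T _ _ h₁ h₂ ?_ (Set.inter_union_sdiff _ _).symm
    (Set.inter_union_sdiff _ _).symm (Set.inter_union_sdiff _ _).symm ?_
    (fun _ _ => rfl) (fun _ _ => rfl)
  · exact Set.disjoint_left.mpr fun x hx₁ hx₂ => hx₂.2 hx₁.2
  · ext b
    refine ⟨fun hb => ?_, fun hb => hb.elim (·.1) (·.1)⟩
    obtain ⟨x, hx⟩ := nonempty_of_mem_H hb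
    by_cases hPx : P (T.rootOf x)
    · exact Or.inl ⟨hb, fun y hy => hP b hb x hx y hy hPx⟩
    · exact Or.inr ⟨hb, fun y hy => hP.not b hb x hx y hy hPx⟩

/-- Inverse of `𝓔`: when `h0 = ∅`, a block of `H` containing a root takes the place of `h0`. -/
def promote (T : LionsForest V d) (b : Set V) (hb : b ∈ T.H) (h0e : T.h0 = ∅)
    (hroot : ∃ x ∈ b, ∀ y, (x, y) ∉ T.E) : LionsForest V d where
  N := T.N
  E := T.E
  h0 := b
  H := T.H \ {b}
  L := T.L
  depth := T.depth
  finite_N := T.finite_N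
  nonempty_N := T.nonempty_N
  mem_of_edge := T.mem_of_edge
  edge_unique := T.edge_unique
  h0_subset := (T.H_partition.2.1 b hb).trans Set.sdiff_subset
  H_partition := by
    simpa only [h0e, Set.sdiff_empty] using T.H_partition.sdiff_of_mem hb
  depth_root := T.depth_root
  depth_edge := T.depth_edge
  h0_root _ := hroot
  hyper_parent h hh := by
    rw [← H_eq_insert_sdiff hb, ← hyperedges_eq_H h0e] at hh
    exact T.hyper_parent h hh
  hyper_sibling h hh := by
    rw [← H_eq_insert_sdiff hb, ← hyperedges_eq_H h0e] at hh
    exact T.hyper_sibling h hh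

lemma exists_mem_H_root (h0e : T.h0 = ∅) : ∃ b ∈ T.H, ∃ x ∈ b, ∀ y, (x, y) ∉ T.E := by
  obtain ⟨x, hx⟩ := T.nonempty_N
  have hroot : T.rootOf x ∈ T.N \ T.h0 := ⟨rootOf_mem hx, by simp [h0e]⟩
  rw [← T.H_partition.2.2.2] at hroot
  obtain ⟨b, hb, hxb⟩ := hroot
  exact ⟨b, hb, _, hxb, not_edge_rootOf hx⟩

lemma inGenClass_of_promote {b : Set V} (hb : b ∈ T.H) (h0e : T.h0 = ∅)
    (hroot : ∃ x ∈ b, ∀ y, (x, y) ∉ T.E) (h : InGenClass (T.promote b hb h0e hroot)) :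
    InGenClass T :=
  InGenClass.integ T _ h rfl rfl h0e (H_eq_insert_sdiff hb) fun _ _ => rfl

lemma depth_pos_of_ne_root {r : V} (htree : ∀ x ∈ T.N, T.rootOf x = r) {x : V}
    (hx : x ∈ T.N) (hxr : x ≠ r) : 0 < T.depth x :=
  depth_pos_of_rootOf_ne (by rw [htree x hx]; exact Ne.symm hxr)

/-- Inverse of grafting: remove the root `r` of a tree. -/
def unGraft (T : LionsForest V d) (r : V) (hr : r ∈ T.h0) (hroot : ∀ y, (r, y) ∉ T.E)
    (htree : ∀ x ∈ T.N, T.rootOf x = r) (hne : (T.N \ {r}).Nonempty) :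
    LionsForest V d where
  N := T.N \ {r}
  E := {e ∈ T.E | e.2 ≠ r}
  h0 := T.h0 \ {r}
  H := T.H
  L := T.L
  depth x := T.depth x - 1
  finite_N := T.finite_N.sdiff
  nonempty_N := hne
  mem_of_edge := by
    rintro x y ⟨he, hyr⟩
    obtain ⟨hx, hy⟩ := T.mem_of_edge x y he
    exact ⟨⟨hx, fun hxr => hroot y (hxr ▸ he)⟩, hy, hyr⟩
  edge_unique x y z hy hz := T.edge_unique x y z hy.1 hz.1
  h0_subset x hx := ⟨T.h0_subset hx.1, hx.2⟩
  H_partition := by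
    rw [sdiff_sdiff_sdiff_cancel_right (Set.singleton_subset_iff.mpr hr)]
    exact T.H_partition
  depth_root := by
    rintro x ⟨hx, hxr⟩ hnoe
    have hpar := edge_par hx (depth_pos_of_ne_root htree hx hxr)
    have hparr : T.par x = r := by_contra fun h => hnoe _ ⟨hpar, h⟩
    have := T.depth_edge _ _ hpar
    rw [hparr, T.depth_root r (T.h0_subset hr) hroot] at this
    simp only [this, Nat.sub_self]
  depth_edge := by
    rintro x y ⟨he, hyr⟩
    have := T.depth_edge x y he
    have := depth_pos_of_ne_root htree (T.mem_of_edge x y he).2 hyr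
    omega
  h0_root := by
    rintro ⟨y, hy, hyr⟩
    have hyN := T.h0_subset hy
    have hypos := depth_pos_of_ne_root htree hyN hyr
    have hr0 := T.depth_root r (T.h0_subset hr) hroot
    obtain ⟨hzN, hz1⟩ := iterate_par_mem hyN (k := T.depth y - 1) (by omega)
    have hz : T.par^[T.depth y - 1] y ∈ T.h0 :=
      iterate_par_mem_of_mem_hyperedges (h0_mem_hyperedges ⟨y, hy⟩) hr hy (by omega)
    refine ⟨_, ⟨hz, fun hzr => ?_⟩, ?_⟩
    · rw [Set.mem_singleton_iff.mp hzr] at hz1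
      omega
    · rintro w ⟨hw, hwr⟩
      have hw0 : T.depth w = 0 := by
        have := T.depth_edge (T.par^[T.depth y - 1] y) w hw
        omega
      exact hwr ((rootOf_of_depth_eq_zero hw0).symm.trans (htree w (T.mem_of_edge _ _ hw).2))
  hyper_parent := by
    rintro h ⟨rfl | hh, -⟩ x hx y hy hlt z ⟨hz, hzr⟩
    · exact ⟨T.hyper_parent _ (h0_mem_hyperedges ⟨x, hx.1⟩) x hx.1 y hy.1 (by omega) z hz, hzr⟩
    · exact T.hyper_parent h (mem_hyperedges_of_mem_H hh) x hx y hy (by omega) z hz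
  hyper_sibling := by
    rintro h ⟨rfl | hh, -⟩ x₁ hx₁ y₁ hy₁ hdepth x₂ y₂ ⟨hx, hx₂⟩ ⟨hy, hy₂⟩ hxy <;>
      have := depth_pos_of_edge hx <;> have := depth_pos_of_edge hy <;>
      replace hdepth : T.depth x₁ = T.depth y₁ := by omega
    · obtain ⟨h₁, h₂⟩ := T.hyper_sibling _ (h0_mem_hyperedges ⟨x₁, hx₁.1⟩) x₁ hx₁.1 y₁ hy₁.1
        hdepth x₂ y₂ hx hy hxy
      exact ⟨⟨h₁, hx₂⟩, ⟨h₂, hy₂⟩⟩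
    · exact T.hyper_sibling h (mem_hyperedges_of_mem_H hh) x₁ hx₁ y₁ hy₁ hdepth x₂ y₂ hx hy hxy

lemma inGenClass_of_unGraft {r : V} (hr : r ∈ T.h0) (hroot : ∀ y, (r, y) ∉ T.E)
    (htree : ∀ x ∈ T.N, T.rootOf x = r) (hne : (T.N \ {r}).Nonempty)
    (h : InGenClass (T.unGraft r hr hroot htree hne)) : InGenClass T := by
  have hrN := T.h0_subset hr
  have hE : T.E = {e ∈ T.E | e.2 ≠ r} ∪
      {e | e.1 ∈ T.N \ {r} ∧ (∀ y, (e.1, y) ∉ {e ∈ T.E | e.2 ≠ r}) ∧ e.2 = r} := by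
    ext ⟨x, y⟩
    constructor
    · intro he
      by_cases hyr : y = r
      · exact Or.inr ⟨⟨(T.mem_of_edge x y he).1, fun hxr => hroot y (hxr ▸ he)⟩,
          fun z hz => hz.2 (T.edge_unique x z y hz.1 he ▸ hyr), hyr⟩
      · exact Or.inl ⟨he, hyr⟩
    · rintro (⟨he, -⟩ | ⟨⟨hx, hxr⟩, hnoe, hyr⟩)
      · exact he
      · have hpar := edge_par hx (depth_pos_of_ne_root htree hx hxr)
        have hparr : T.par x = r := by_contra fun h => hnoe _ ⟨hpar, h⟩
        rwa [show y = r from hyr, ← hparr]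
  exact InGenClass.graft T _ r (T.L r) h (fun h => h.2 rfl)
    (Set.insert_sdiff_self_of_mem hrN).symm hE (Set.insert_sdiff_self_of_mem hr).symm rfl
    (fun _ _ => rfl) rfl

lemma inGenClass_of_N_eq_singleton {r : V} (hr : r ∈ T.h0) (hN : T.N = {r}) :
    InGenClass T := by
  have hh0 : T.h0 = {r} := Set.Subset.antisymm (hN ▸ T.h0_subset) (Set.singleton_subset_iff.mpr hr)
  have hE : T.E = ∅ := by
    refine Set.eq_empty_of_forall_notMem fun ⟨x, y⟩ he => ?_
    obtain ⟨hx, hy⟩ := T.mem_of_edge x y he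
    rw [hN, Set.mem_singleton_iff] at hx hy
    have := T.depth_edge x y he
    rw [hx, hy] at this
    omega
  have hH : T.H = ∅ := by
    refine Set.eq_empty_of_forall_notMem fun b hb => ?_
    obtain ⟨x, hx⟩ := nonempty_of_mem_H hb
    have := T.H_partition.2.1 b hb hx
    rw [hN, hh0, sdiff_self] at this
    exact this
  exact InGenClass.single T r (T.L r) hN hE hh0 hH rfl

lemma inGenClass_of_h0_nonempty (hne : T.h0.Nonempty)
    (ih : ∀ T' : LionsForest V d, T'.N.ncard < T.N.ncard → InGenClass T') : InGenClass T := by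
  obtain ⟨r, hr, hroot⟩ := T.h0_root hne
  have hrN := T.h0_subset hr
  have hrr : T.rootOf r = r := rootOf_of_depth_eq_zero (T.depth_root r hrN hroot)
  by_cases htree : ∀ x ∈ T.N, T.rootOf x = r
  · rcases (T.N \ {r}).eq_empty_or_nonempty with hsingle | hne'
    · exact inGenClass_of_N_eq_singleton hr
        (Set.Subset.antisymm (Set.sdiff_eq_empty.mp hsingle) (Set.singleton_subset_iff.mpr hrN))
    · exact inGenClass_of_unGraft hr hroot htree hne'
        (ih _ (Set.ncard_sdiff_singleton_lt_of_mem hrN T.finite_N))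
  · push Not at htree
    have hin : ∃ x ∈ T.N, T.rootOf x = r := ⟨r, hrN, hrr⟩
    exact inGenClass_of_restrict (separatesH_eq hr) hin htree
      (ih _ (ncard_restrict_lt hin _ htree))
      (ih _ (ncard_restrict_lt htree _ (by simpa using hin)))

lemma inGenClass_of_forall_ncard_lt
    (ih : ∀ T' : LionsForest V d, T'.N.ncard < T.N.ncard → InGenClass T') : InGenClass T := by
  rcases T.h0.eq_empty_or_nonempty with h0e | hne
  · obtain ⟨b, hb, x, hx, hxroot⟩ := exists_mem_H_root h0e
    have hroot : ∃ x ∈ b, ∀ y, (x, y) ∉ T.E := ⟨x, hx, hxroot⟩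
    exact inGenClass_of_promote hb h0e hroot
      (inGenClass_of_h0_nonempty (T := T.promote b hb h0e hroot) ⟨x, hx⟩ ih)
  · exact inGenClass_of_h0_nonempty hne ih

theorem inGenClass (T : LionsForest V d) : InGenClass T :=
  inGenClass_of_forall_ncard_lt fun T' _ => inGenClass T'
termination_by T.N.ncard

end LionsForest

lemma LFIso.refl {V : Type*} {d : ℕ} (T : LionsForest V d) : LFIso T T :=
  ⟨id, Set.bijOn_id _, fun _ _ _ _ => Iff.rfl, fun _ _ => rfl, Set.image_id _,
    by simp only [Set.image_id', Set.image_id]⟩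

theorem stmt_4_general {V : Type*} {d : ℕ} (T : LionsForest V d) :
    ∃ T' : LionsForest V d, InGenClass T' ∧ LFIso T T' :=
  ⟨T, T.inGenClass, LFIso.refl T⟩

/-- Every Lions forest is isomorphic to a Lions forest lying in the smallest class of Lions
forests containing the single-node Lions trees and closed under products, integration and
grafting. -/
theorem stmt_4 {V : Type*} {d : ℕ} (hd : 1 ≤ d) (T : LionsForest V d) :
    ∃ T' : LionsForest V d, InGenClass T' ∧ LFIso T T' :=
  stmt_4_general T
end

section
/- Let T = (N, E, h0, H, L) be a Lions forest with dual Lions forest T* = (H', D), and let {h1, h2} ∈ D. Define T' = (N, E, g0, G, L) as follows: if h0 ∈ {h1, h2}, then g0 = h1 ∪ h2 and G = H ∖ {h1, h2}; otherwise, g0 = h0 and G = (H ∖ {h1, h2}) ∪ {h1 ∪ h2}. Then T' is a Lions forest. -/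
/-- A root of the forest: a node with no outgoing edge. -/
def LionsForest.IsRoot {V : Type*} {d : ℕ} (T : LionsForest V d) (x : V) : Prop :=
  x ∈ T.N ∧ ∀ y, (x, y) ∉ T.E

/-- The set of hyperedges `H' = (H ∪ {h0}) \ {∅}` of a Lions forest. -/
def LionsForest.hyperedges {V : Type*} {d : ℕ} (T : LionsForest V d) : Set (Set V) :=
  insert T.h0 T.H \ {∅}

/-- The adjacency relation of the dual Lions forest `T* = (H', D)`: two distinct hyperedges
`h1, h2 ∈ H'` are adjacent iff `h1 ∪ h2` satisfies the structural conditions (ii), (iii) of a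
hyperedge. -/
def dualAdj {V : Type*} {d : ℕ} (T : LionsForest V d) (h1 h2 : Set V) : Prop :=
  h1 ∈ T.hyperedges ∧ h2 ∈ T.hyperedges ∧ h1 ≠ h2 ∧
  (∀ x ∈ h1 ∪ h2, ∀ y ∈ h1 ∪ h2, T.depth x < T.depth y →
    ∀ z, (y, z) ∈ T.E → z ∈ h1 ∪ h2) ∧
  (∀ x₁ ∈ h1 ∪ h2, ∀ y₁ ∈ h1 ∪ h2, T.depth x₁ = T.depth y₁ →
    ∀ x₂ y₂, (x₁, x₂) ∈ T.E → (y₁, y₂) ∈ T.E → x₂ ≠ y₂ →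
      x₂ ∈ h1 ∪ h2 ∧ y₂ ∈ h1 ∪ h2)

/-!
Dual adjacency of `h1` and `h2` says precisely that `h1 ∪ h2` satisfies conditions (ii) and (iii),
and every other hyperedge of the merged forest is already a hyperedge of `T`. If neither block is
`h0`, both lie in `H` and merging two blocks of a partition gives a partition. If, say, `h0 = h1`,
then `h1 ∪ h2` still contains the root that `h0` contains, and `h0 ∉ H`, so removing the block `h2`
from `H` partitions `N \ (h1 ∪ h2)`.
-/

section

variable {V : Type*} {d : ℕ}

namespace IsPartitionOf

variable {S : Set V} {P : Set (Set V)} {p q : Set V}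

theorem sdiff_singleton (hP : IsPartitionOf S P) (hq : q ∈ P) :
    IsPartitionOf (S \ q) (P \ {q}) := by
  obtain ⟨hne, hsub, hdis, hun⟩ := hP
  refine ⟨fun p hp => hne p hp.1, fun p hp => ?_, hdis.mono Set.sdiff_subset, ?_⟩
  · exact Set.subset_sdiff.2 ⟨hsub p hp.1, hdis hp.1 hq hp.2⟩
  · rw [← hun]
    ext x
    simp only [Set.mem_sUnion, Set.mem_sdiff, Set.mem_singleton_iff]
    constructor
    · rintro ⟨p, ⟨hp, hpq⟩, hx⟩
      exact ⟨⟨p, hp, hx⟩, fun hxq => Set.disjoint_left.1 (hdis hp hq hpq) hx hxq⟩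
    · rintro ⟨⟨p, hp, hx⟩, hxq⟩
      exact ⟨p, ⟨hp, by rintro rfl; exact hxq hx⟩, hx⟩

theorem merge (hP : IsPartitionOf S P) (hp : p ∈ P) (hq : q ∈ P) :
    IsPartitionOf S (P \ {p, q} ∪ {p ∪ q}) := by
  obtain ⟨hne, hsub, hdis, hun⟩ := hP
  have hdis_pq : ∀ r ∈ P \ {p, q}, Disjoint (p ∪ q) r := fun r ⟨hr, hrpq⟩ =>
    Disjoint.union_left (hdis hp hr fun h => hrpq (by simp [h]))
      (hdis hq hr fun h => hrpq (by simp [h]))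
  rw [Set.union_singleton]
  refine ⟨?_, ?_, ?_, ?_⟩
  · rintro r (rfl | hr)
    exacts [(hne p hp).mono Set.subset_union_left, hne r hr.1]
  · rintro r (rfl | hr)
    exacts [Set.union_subset (hsub p hp) (hsub q hq), hsub r hr.1]
  · exact Set.pairwise_insert_of_symm.2
      ⟨hdis.mono Set.sdiff_subset, fun r hr _ => hdis_pq r hr⟩
  · rw [Set.sUnion_insert, ← hun]
    ext x
    simp only [Set.mem_union, Set.mem_sUnion, Set.mem_sdiff, Set.mem_insert_iff,
      Set.mem_singleton_iff]
    constructor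
    · rintro ((hx | hx) | ⟨r, ⟨hr, -⟩, hx⟩)
      exacts [⟨p, hp, hx⟩, ⟨q, hq, hx⟩, ⟨r, hr, hx⟩]
    · rintro ⟨r, hr, hx⟩
      by_cases hrp : r = p
      · exact Or.inl (Or.inl (hrp ▸ hx))
      by_cases hrq : r = q
      · exact Or.inl (Or.inr (hrq ▸ hx))
      exact Or.inr ⟨r, ⟨hr, not_or.2 ⟨hrp, hrq⟩⟩, hx⟩

end IsPartitionOf

namespace LionsForest

/-- Conditions (ii) and (iii) on a single hyperedge. -/
def IsAdmissible (T : LionsForest V d) (h : Set V) : Prop :=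
  (∀ x ∈ h, ∀ y ∈ h, T.depth x < T.depth y → ∀ z, (y, z) ∈ T.E → z ∈ h) ∧
  (∀ x₁ ∈ h, ∀ y₁ ∈ h, T.depth x₁ = T.depth y₁ →
    ∀ x₂ y₂, (x₁, x₂) ∈ T.E → (y₁, y₂) ∈ T.E → x₂ ≠ y₂ → x₂ ∈ h ∧ y₂ ∈ h)

variable (T : LionsForest V d)

theorem isAdmissible_of_mem_hyperedges {h : Set V} (hh : h ∈ T.hyperedges) :
    T.IsAdmissible h :=
  ⟨T.hyper_parent h hh, T.hyper_sibling h hh⟩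

theorem h0_notMem_H : T.h0 ∉ T.H := fun hH =>
  have ⟨_, hx⟩ := T.H_partition.1 _ hH
  (T.H_partition.2.1 _ hH hx).2 hx

theorem mem_H_of_mem_hyperedges {h : Set V} (hh : h ∈ T.hyperedges) (h0h : T.h0 ≠ h) :
    h ∈ T.H :=
  hh.1.resolve_left (Ne.symm h0h)

def withHyperedges (g0 : Set V) (G : Set (Set V)) (hg0 : g0 ⊆ T.N)
    (hG : IsPartitionOf (T.N \ g0) G) (hroot : g0.Nonempty → ∃ x ∈ g0, ∀ y, (x, y) ∉ T.E)
    (hadm : ∀ h ∈ insert g0 G \ {∅}, T.IsAdmissible h) : LionsForest V d where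
  __ := T
  h0 := g0
  H := G
  h0_subset := hg0
  H_partition := hG
  h0_root := hroot
  hyper_parent h hh := (hadm h hh).1
  hyper_sibling h hh := (hadm h hh).2

end LionsForest

namespace dualAdj

variable {T : LionsForest V d} {h1 h2 : Set V}

theorem symm (hadj : dualAdj T h1 h2) : dualAdj T h2 h1 := by
  obtain ⟨hm1, hm2, hne, hpar, hsib⟩ := hadj
  rw [Set.union_comm] at hpar hsib
  exact ⟨hm2, hm1, hne.symm, hpar, hsib⟩

theorem isAdmissible_union (hadj : dualAdj T h1 h2) : T.IsAdmissible (h1 ∪ h2) :=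
  hadj.2.2.2

theorem isAdmissible_of_mem (hadj : dualAdj T h1 h2) {h : Set V}
    (hh : h ∈ T.hyperedges ∨ h = h1 ∪ h2) : T.IsAdmissible h := by
  rcases hh with hh | rfl
  exacts [T.isAdmissible_of_mem_hyperedges hh, hadj.isAdmissible_union]

theorem exists_merge_of_h0_eq (hadj : dualAdj T h1 h2) (h01 : T.h0 = h1) :
    ∃ T' : LionsForest V d, T'.N = T.N ∧ T'.E = T.E ∧ T'.L = T.L ∧
      T'.h0 = h1 ∪ h2 ∧ T'.H = T.H \ {h1, h2} := by
  subst h01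
  have h2H : h2 ∈ T.H := T.mem_H_of_mem_hyperedges hadj.2.1 hadj.2.2.1
  have hH : T.H \ {T.h0, h2} = T.H \ {h2} := by
    rw [Set.insert_eq, ← Set.sdiff_sdiff, Set.sdiff_singleton_eq_self T.h0_notMem_H]
  have hpart : IsPartitionOf (T.N \ (T.h0 ∪ h2)) (T.H \ {T.h0, h2}) := by
    rw [hH, ← Set.sdiff_sdiff]
    exact T.H_partition.sdiff_singleton h2H
  have hsub : T.h0 ∪ h2 ⊆ T.N :=
    Set.union_subset T.h0_subset ((T.H_partition.2.1 h2 h2H).trans Set.sdiff_subset)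
  have hroot : (T.h0 ∪ h2).Nonempty → ∃ x ∈ T.h0 ∪ h2, ∀ y, (x, y) ∉ T.E := fun _ =>
    have ⟨x, hx, hroot⟩ := T.h0_root (Set.nonempty_iff_ne_empty.2 hadj.1.2)
    ⟨x, Or.inl hx, hroot⟩
  refine ⟨T.withHyperedges _ _ hsub hpart hroot fun h hh => hadj.isAdmissible_of_mem ?_,
    rfl, rfl, rfl, rfl, rfl⟩
  rcases hh with ⟨rfl | hh, hne⟩
  exacts [Or.inr rfl, Or.inl ⟨Or.inr hh.1, hne⟩]

theorem exists_merge_of_h0_ne (hadj : dualAdj T h1 h2) (hn1 : T.h0 ≠ h1) (hn2 : T.h0 ≠ h2) :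
    ∃ T' : LionsForest V d, T'.N = T.N ∧ T'.E = T.E ∧ T'.L = T.L ∧
      T'.h0 = T.h0 ∧ T'.H = T.H \ {h1, h2} ∪ {h1 ∪ h2} := by
  have hpart := T.H_partition.merge (T.mem_H_of_mem_hyperedges hadj.1 hn1)
    (T.mem_H_of_mem_hyperedges hadj.2.1 hn2)
  refine ⟨T.withHyperedges _ _ T.h0_subset hpart T.h0_root
    fun h hh => hadj.isAdmissible_of_mem ?_, rfl, rfl, rfl, rfl, rfl⟩
  rcases hh with ⟨rfl | (⟨hh, -⟩ | rfl), hne⟩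
  exacts [Or.inl ⟨Or.inl rfl, hne⟩, Or.inl ⟨Or.inr hh, hne⟩, Or.inr rfl]

end dualAdj

end

/-- Merging two dual-adjacent hyperedges of a Lions forest yields a Lions forest: if
`{h1, h2}` is an edge of the dual Lions forest of `T`, there is a Lions forest `T'` with the
same nodes, edges and labels, whose hyperedge data is obtained by replacing `h1` and `h2` by
`h1 ∪ h2` (this union becoming the `0`-hyperedge when `h0 ∈ {h1, h2}`). -/
theorem stmt_6 {V : Type*} {d : ℕ} (T : LionsForest V d) (h1 h2 : Set V)
    (hadj : dualAdj T h1 h2) :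
    ∃ T' : LionsForest V d,
      T'.N = T.N ∧ T'.E = T.E ∧ T'.L = T.L ∧
      ((T.h0 = h1 ∨ T.h0 = h2) →
        T'.h0 = h1 ∪ h2 ∧ T'.H = T.H \ {h1, h2}) ∧
      (¬(T.h0 = h1 ∨ T.h0 = h2) →
        T'.h0 = T.h0 ∧ T'.H = T.H \ {h1, h2} ∪ {h1 ∪ h2}) := by
  by_cases hc : T.h0 = h1 ∨ T.h0 = h2
  · obtain ⟨T', hN, hE, hL, hh0, hH⟩ : ∃ T' : LionsForest V d, T'.N = T.N ∧ T'.E = T.E ∧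
        T'.L = T.L ∧ T'.h0 = h1 ∪ h2 ∧ T'.H = T.H \ {h1, h2} := by
      rcases hc with h01 | h02
      · exact hadj.exists_merge_of_h0_eq h01
      · rw [Set.union_comm, Set.pair_comm]
        exact hadj.symm.exists_merge_of_h0_eq h02
    exact ⟨T', hN, hE, hL, fun _ => ⟨hh0, hH⟩, absurd hc⟩
  · obtain ⟨T', hN, hE, hL, hh0, hH⟩ :=
      hadj.exists_merge_of_h0_ne (fun h => hc (Or.inl h)) (fun h => hc (Or.inr h))
    exact ⟨T', hN, hE, hL, fun h => absurd h hc, fun _ => ⟨hh0, hH⟩⟩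
end

section
/- Let α, β > 0 and γ > min(α, β). For i = 1, …, n let p_i be integrability functionals and let q : F^{γ,α,β} → [1, ∞) be such that (p_i, q) is a dual pair of integrability functionals for every i. Let r > 1 be such that 1/r + Σ_{i=1}^n 1/p_i[1] ≤ 1. Define p : F0^{γ,α,β} → ℝ by p[1] = (1/r + Σ_{i=1}^n 1/p_i[1])^{-1} and, for T ∈ F^{γ,α,β}, p[T] = p[1]·q[T]/(q[T] − p[1]). Then p[T] ∈ (1, ∞) for every T ∈ F^{γ,α,β}, p is an integrability functional, and (p, q) is a dual pair of integrability functionals. -/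
/-- The grading `𝒢_{α,β}[T] = α·|h0| + β·|N \ h0|` of a Lions forest. -/
noncomputable def lfGrade {V : Type*} {d : ℕ} (α β : ℝ) (T : LionsForest V d) : ℝ :=
  α * T.h0.ncard + β * (T.N \ T.h0).ncard

/-- `T3 = T1 ⊛ T2` is the product of the Lions forests `T1` and `T2` (with disjoint node
sets). -/
def IsProduct {V : Type*} {d : ℕ} (T1 T2 T3 : LionsForest V d) : Prop :=
  Disjoint T1.N T2.N ∧
  T3.N = T1.N ∪ T2.N ∧ T3.E = T1.E ∪ T2.E ∧
  T3.h0 = T1.h0 ∪ T2.h0 ∧ T3.H = T1.H ∪ T2.H ∧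
  (∀ x ∈ T1.N, T3.L x = T1.L x) ∧ (∀ x ∈ T2.N, T3.L x = T2.L x)

/-- `T' = 𝓔[T]` is the integrated Lions forest: same nodes, edges and labels, empty
`0`-hyperedge, and partition `(H ∪ {h0}) \ {∅}`. -/
def IsInteg {V : Type*} {d : ℕ} (T T' : LionsForest V d) : Prop :=
  T'.N = T.N ∧ T'.E = T.E ∧ T'.h0 = ∅ ∧
  T'.H = insert T.h0 T.H \ {(∅ : Set V)} ∧
  (∀ x ∈ T.N, T'.L x = T.L x)

/-- An admissible cut of a Lions forest: a set `c ⊆ E` of edges such that every directed path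
from a node towards its root contains at most one edge of `c`. -/
def IsAdmissibleCut {V : Type*} {d : ℕ} (T : LionsForest V d) (c : Set (V × V)) : Prop :=
  c ⊆ T.E ∧ ∀ e₁ ∈ c, ∀ e₂ ∈ c, e₁ ≠ e₂ →
    ¬ Relation.ReflTransGen (fun a b : V => (a, b) ∈ T.E) e₁.2 e₂.1

/-- The nodes joined to a root by a directed path using no edge of the cut `c`. -/
def cutRootSet {V : Type*} {d : ℕ} (T : LionsForest V d) (c : Set (V × V)) : Set V :=
  {x ∈ T.N | ∃ r, (∀ z, (r, z) ∉ T.E) ∧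
    Relation.ReflTransGen (fun a b : V => (a, b) ∈ T.E ∧ (a, b) ∉ c) x r}

/-- `R` is the root of the cut `c` of `T`: the restriction of `T` to `cutRootSet T c`. -/
def IsCutRoot {V : Type*} {d : ℕ} (T : LionsForest V d) (c : Set (V × V))
    (R : LionsForest V d) : Prop :=
  R.N = cutRootSet T c ∧
  R.E = {e ∈ T.E | e.1 ∈ cutRootSet T c ∧ e.2 ∈ cutRootSet T c} ∧
  R.h0 = T.h0 ∩ cutRootSet T c ∧
  R.H = ((fun h => h ∩ cutRootSet T c) '' T.H) \ {∅} ∧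
  (∀ x ∈ cutRootSet T c, R.L x = T.L x)

/-- `Pr` is the prune of the cut `c` of `T`: the restriction of `T` to the complement of
`cutRootSet T c`, with the edges of `c` removed. -/
def IsCutPrune {V : Type*} {d : ℕ} (T : LionsForest V d) (c : Set (V × V))
    (Pr : LionsForest V d) : Prop :=
  Pr.N = T.N \ cutRootSet T c ∧
  Pr.E = {e ∈ T.E | e.1 ∈ T.N \ cutRootSet T c ∧ e.2 ∈ T.N \ cutRootSet T c} \ c ∧
  Pr.h0 = T.h0 ∩ (T.N \ cutRootSet T c) ∧
  Pr.H = ((fun h => h ∩ (T.N \ cutRootSet T c)) '' T.H) \ {∅} ∧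
  (∀ x ∈ T.N \ cutRootSet T c, Pr.L x = T.L x)

/-- `T1` admits an admissible cut with (nonempty) prune `T2` and (nonempty) root `T3`. -/
def IsCutOf {V : Type*} {d : ℕ} (T1 T2 T3 : LionsForest V d) : Prop :=
  ∃ c : Set (V × V), IsAdmissibleCut T1 c ∧ IsCutPrune T1 c T2 ∧ IsCutRoot T1 c T3

/-- `(p, q)` (with `p1 = p[𝟏]` the value of `p` at the empty forest) is a dual pair of
integrability functionals on `F^{γ,α,β} = {T : 𝒢_{α,β}[T] ≤ γ}`. -/
def IsDualPair {V : Type*} {d : ℕ} (γ α β : ℝ) (p1 : ℝ)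
    (p q : LionsForest V d → ℝ) : Prop :=
  (1 ≤ p1) ∧
  (∀ T : LionsForest V d, lfGrade α β T ≤ γ → 1 ≤ p T) ∧
  (∀ T : LionsForest V d, lfGrade α β T ≤ γ → 1 ≤ q T) ∧
  (∀ T : LionsForest V d, lfGrade α β T ≤ γ → 1 / p1 = 1 / p T + 1 / q T) ∧
  (∀ T1 T2 T3 : LionsForest V d, lfGrade α β T1 ≤ γ → IsCutOf T1 T2 T3 →
    1 / q T2 + 1 / q T3 ≤ 1 / q T1) ∧
  (∀ T T' : LionsForest V d, lfGrade α β T ≤ γ → lfGrade α β T' ≤ γ → IsInteg T T' →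
    q T' = q T) ∧
  (∀ T1 T2 T3 : LionsForest V d, lfGrade α β T1 ≤ γ → lfGrade α β T2 ≤ γ →
    lfGrade α β T3 ≤ γ → IsProduct T1 T2 T3 → 1 / q T3 = 1 / q T1 + 1 / q T2)

/- The duality relation 1/p[T] = 1/P − 1/q[T] forces p[T] = P·q[T]/(q[T] − P), which is an
integrability functional as soon as 1 ≤ P < q[T]. Any one of the given dual pairs gives
1/q[T] < 1/p_i[𝟏] < 1/r + Σⱼ 1/p_j[𝟏], which is this bound for P = (1/r + Σⱼ 1/p_j[𝟏])⁻¹. -/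

lemma one_lt_mul_div_sub {P x : ℝ} (hP : 1 ≤ P) (hPx : P < x) : 1 < P * x / (x - P) := by
  rw [lt_div_iff₀ (sub_pos.2 hPx)]
  nlinarith

lemma one_div_mul_div_sub_add_one_div {P x : ℝ} (hP : P ≠ 0) (hx : x ≠ 0) :
    1 / (P * x / (x - P)) + 1 / x = 1 / P := by
  field_simp
  ring

section DualPair

variable {V : Type*} {d : ℕ} {γ α β p1 : ℝ} {p q : LionsForest V d → ℝ}

lemma IsDualPair.one_div_lt (h : IsDualPair γ α β p1 p q) {T : LionsForest V d}
    (hT : lfGrade α β T ≤ γ) : 1 / q T < 1 / p1 := by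
  have hp : 0 < 1 / p T := one_div_pos.2 (zero_lt_one.trans_le (h.2.1 T hT))
  linarith [h.2.2.2.1 T hT]

lemma IsDualPair.of_lt (h : IsDualPair γ α β p1 p q) {P : ℝ} (hP : 1 ≤ P)
    (hPq : ∀ T : LionsForest V d, lfGrade α β T ≤ γ → P < q T) :
    IsDualPair γ α β P (fun T => P * q T / (q T - P)) q := by
  obtain ⟨-, -, hq, -, hcut, hinteg, hprod⟩ := h
  refine ⟨hP, fun T hT => (one_lt_mul_div_sub hP (hPq T hT)).le, hq, fun T hT => ?_,
    hcut, hinteg, hprod⟩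
  exact (one_div_mul_div_sub_add_one_div (by positivity) (by linarith [hPq T hT])).symm

end DualPair

theorem stmt_9_general {V : Type*} {d : ℕ} (γ α β : ℝ)
    (n : ℕ) (hn : 1 ≤ n)
    (p1 : Fin n → ℝ) (pf : Fin n → (LionsForest V d → ℝ))
    (q : LionsForest V d → ℝ)
    (hdual : ∀ i, IsDualPair γ α β (p1 i) (pf i) q)
    (r : ℝ) (hr : 1 < r)
    (hsum : 1 / r + ∑ i, 1 / p1 i ≤ 1) :
    (∀ T : LionsForest V d, lfGrade α β T ≤ γ →
      1 < (1 / r + ∑ i, 1 / p1 i)⁻¹ * q T / (q T - (1 / r + ∑ i, 1 / p1 i)⁻¹)) ∧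
    IsDualPair γ α β ((1 / r + ∑ i, 1 / p1 i)⁻¹)
      (fun T => (1 / r + ∑ i, 1 / p1 i)⁻¹ * q T / (q T - (1 / r + ∑ i, 1 / p1 i)⁻¹)) q := by
  set s : ℝ := 1 / r + ∑ i, 1 / p1 i
  obtain ⟨i₀⟩ : Nonempty (Fin n) := ⟨⟨0, hn⟩⟩
  have h1r : 0 < 1 / r := one_div_pos.2 (zero_lt_one.trans hr)
  have hterm : ∀ i, 0 ≤ 1 / p1 i := fun i => one_div_nonneg.2 (zero_le_one.trans (hdual i).1)
  have hs_pos : 0 < s := by linarith [Finset.sum_nonneg fun i (_ : i ∈ Finset.univ) => hterm i]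
  have hlt : ∀ T : LionsForest V d, lfGrade α β T ≤ γ → s⁻¹ < q T := by
    intro T hT
    have hq : 0 < q T := zero_lt_one.trans_le ((hdual i₀).2.2.1 T hT)
    have hle : 1 / p1 i₀ ≤ ∑ i, 1 / p1 i :=
      Finset.single_le_sum (fun i _ => hterm i) (Finset.mem_univ i₀)
    refine inv_lt_of_inv_lt₀ hq ?_
    rw [← one_div]
    linarith [(hdual i₀).one_div_lt hT]
  have hP : 1 ≤ s⁻¹ := (one_le_inv₀ hs_pos).2 hsum
  exact ⟨fun T hT => one_lt_mul_div_sub hP (hlt T hT), (hdual i₀).of_lt hP hlt⟩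

/-- Given integrability functionals `(p1 i, pf i)` for `i = 1, …, n`, each forming a dual
pair with the same dual integrability functional `q`, and `r > 1` with
`1/r + Σᵢ 1/p1 i ≤ 1`, the functional `p` defined by `p[𝟏] = (1/r + Σᵢ 1/(p1 i))⁻¹` and
`p[T] = p[𝟏]·q[T]/(q[T] − p[𝟏])` takes values in `(1, ∞)` on `F^{γ,α,β}`, is an
integrability functional, and `(p, q)` is a dual pair of integrability functionals. -/
theorem stmt_9 {V : Type*} {d : ℕ} (γ α β : ℝ) (hα : 0 < α) (hβ : 0 < β)
    (hγ : min α β < γ) (n : ℕ) (hn : 1 ≤ n)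
    (p1 : Fin n → ℝ) (pf : Fin n → (LionsForest V d → ℝ))
    (q : LionsForest V d → ℝ)
    (hdual : ∀ i, IsDualPair γ α β (p1 i) (pf i) q)
    (r : ℝ) (hr : 1 < r)
    (hsum : 1 / r + ∑ i, 1 / p1 i ≤ 1) :
    (∀ T : LionsForest V d, lfGrade α β T ≤ γ →
      1 < (1 / r + ∑ i, 1 / p1 i)⁻¹ * q T / (q T - (1 / r + ∑ i, 1 / p1 i)⁻¹)) ∧
    IsDualPair γ α β ((1 / r + ∑ i, 1 / p1 i)⁻¹)
      (fun T => (1 / r + ∑ i, 1 / p1 i)⁻¹ * q T / (q T - (1 / r + ∑ i, 1 / p1 i)⁻¹)) q :=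
  stmt_9_general γ α β n hn p1 pf q hdual r hr hsum
end

section
/- There exist Borel measurable functions φ_0, …, φ_{ℓ−1}, with φ_j : S^j → ℝ symmetric under permutations of its arguments (φ_0 being a constant), such that for every proper subset J ⊊ {1, …, ℓ}: E[ f(X1, …, Xℓ) − Σ_{k=0}^{ℓ−1} Σ_{I ⊆ {1, …, ℓ}, |I| = k} φ_k(X_I) | σ(X_j : j ∈ J) ] = 0 almost surely. Moreover, one may take φ_j(x1, …, xj) = (−1)^{ℓ−1−j} ∫_{S^{ℓ−j}} f(x1, …, xℓ) dμ(x_{j+1})⋯dμ(xℓ). -/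
/-!
Write `E_I f (z) = ∫ f (z on I, y off I) dμ^ℓ(y)`, the conditional expectation of `f (X₁, …, X_ℓ)`
given the coordinates in `I`. By symmetry of `f`, `φ_{|I|}(X_I) = (-1)^{ℓ-1-|I|} E_I f (X)`.
If `A` only depends on the coordinates in `J`, then `∫_A E_I f = ∫_A E_{I ∩ J} f`: resampling the
coordinates in `I \ J` changes neither the law nor `A`. Hence on such sets the sum of the
`φ`-terms integrates to the alternating sum `∑_{I ≠ [ℓ]} (-1)^{ℓ-1-|I|} Θ (I ∩ J)`, where
`Θ T = ∫_A E_T f`. Pairing `I` with `insert a I` for some `a ∉ J` collapses this sum to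
`Θ J = Θ [ℓ] = ∫_A f`.
-/

open MeasureTheory ProbabilityTheory Finset

theorem MeasureTheory.MeasurePreserving.integral_comp_of_aestronglyMeasurable {X Y : Type*}
    [MeasurableSpace X] [MeasurableSpace Y] {ν : Measure X} {ρ : Measure Y} {Φ : X → Y}
    (hΦ : MeasurePreserving Φ ν ρ) {g : Y → ℝ} (hg : AEStronglyMeasurable g ρ) :
    ∫ x, g (Φ x) ∂ν = ∫ y, g y ∂ρ := by
  rw [← hΦ.map_eq] at hg ⊢
  exact (integral_map hΦ.measurable.aemeasurable hg).symm

theorem condExp_comp_eq_zero_of_setIntegral_eq_zero {Ω E F : Type*} [MeasurableSpace Ω]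
    [MeasurableSpace E] [MeasurableSpace F] {P : Measure Ω} [IsFiniteMeasure P]
    {ν : Measure E} {Y : Ω → E} (hY : Measurable Y) (hPY : P.map Y = ν) {W : E → F}
    (hW : Measurable W) {g : E → ℝ} (hg : Integrable g ν)
    (hgW : ∀ t, MeasurableSet t → ∫ x in W ⁻¹' t, g x ∂ν = 0) :
    P[g ∘ Y | MeasurableSpace.comap (W ∘ Y) inferInstance] =ᵐ[P] 0 := by
  subst hPY
  refine (ae_eq_condExp_of_forall_setIntegral_eq (hW.comp hY).comap_le
    ((integrable_map_measure hg.1 hY.aemeasurable).1 hg) (fun _ _ _ => integrableOn_zero)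
    ?_ aestronglyMeasurable_zero).symm
  rintro _ ⟨t, ht, rfl⟩ -
  rw [integral_zero, ← hgW t ht, setIntegral_map (hW ht) hg.1 hY.aemeasurable]
  rfl

theorem sum_neg_one_pow_card_mul_inter_eq_zero {ι : Type*} [Fintype ι] [DecidableEq ι]
    {J : Finset ι} (hJ : J ≠ univ) (Θ : Finset ι → ℝ) :
    ∑ I : Finset ι, (-1) ^ #I * Θ (I ∩ J) = 0 := by
  obtain ⟨a, haJ⟩ : ∃ a, a ∉ J := by simpa [eq_univ_iff_forall] using hJ
  rw [← powerset_univ, ← insert_erase (mem_univ a), sum_powerset_insert (notMem_erase a _),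
    ← sum_add_distrib]
  refine sum_eq_zero fun I hI => ?_
  have haI : a ∉ I := fun h => notMem_erase a _ (mem_powerset.1 hI h)
  rw [card_insert_of_notMem haI, insert_inter_of_notMem haJ, pow_succ]
  ring

theorem sum_card_lt_neg_one_pow_mul_inter {ι : Type*} [Fintype ι] [DecidableEq ι]
    {J : Finset ι} (hJ : J ≠ univ) (Θ : Finset ι → ℝ) :
    ∑ I ∈ univ.filter (fun I : Finset ι => #I < Fintype.card ι),
      (-1) ^ (Fintype.card ι - 1 - #I) * Θ (I ∩ J) = Θ J := by
  set n := Fintype.card ι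
  have hsign : ∀ k < n, (-1 : ℝ) ^ (n - 1 - k) = -(-1) ^ n * (-1) ^ k := by
    intro k hk
    obtain ⟨m, hm⟩ := Nat.exists_eq_add_of_lt hk
    have hsq : ((-1 : ℝ) ^ k) ^ 2 = 1 := by rw [← pow_mul, pow_mul']; simp
    rw [hm, show k + m + 1 - 1 - k = m by omega]
    linear_combination -(-1 : ℝ) ^ m * hsq
  have hfilter : univ.filter (fun I : Finset ι => #I < n) = univ.erase univ := by
    ext I
    simp [n, card_lt_iff_ne_univ]
  rw [sum_congr rfl fun I hI => by rw [hsign #I (mem_filter.1 hI).2, mul_assoc], ← mul_sum,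
    hfilter, sum_erase_eq_sub (mem_univ _), sum_neg_one_pow_card_mul_inter_eq_zero hJ,
    card_univ, univ_inter]
  have hsq : ((-1 : ℝ) ^ n) ^ 2 = 1 := by rw [← pow_mul, pow_mul']; simp
  linear_combination Θ J * hsq

section Piecewise

variable {ι : Type*} [DecidableEq ι] {α : ι → Type*} [∀ i, MeasurableSpace (α i)]

theorem measurable_piecewise_prod (I : Finset ι) :
    Measurable fun p : (∀ i, α i) × (∀ i, α i) => I.piecewise p.1 p.2 := by
  refine measurable_pi_lambda _ fun i => ?_
  by_cases hi : i ∈ I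
  · simp only [hi, piecewise_eq_of_mem]; fun_prop
  · simp only [hi, not_false_eq_true, piecewise_eq_of_notMem]; fun_prop

theorem measurePreserving_piecewise_prod [Fintype ι] (μ : ∀ i, Measure (α i))
    [∀ i, IsProbabilityMeasure (μ i)] (I : Finset ι) :
    MeasurePreserving (fun p : (∀ i, α i) × (∀ i, α i) => I.piecewise p.1 p.2)
      ((Measure.pi μ).prod (Measure.pi μ)) (Measure.pi μ) := by
  refine ⟨measurable_piecewise_prod I, (Measure.pi_eq fun s hs => ?_).symm⟩
  have hpre : (fun p : (∀ i, α i) × (∀ i, α i) => I.piecewise p.1 p.2) ⁻¹' Set.univ.pi s =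
      Set.univ.pi (fun i => if i ∈ I then s i else Set.univ) ×ˢ
        Set.univ.pi (fun i => if i ∈ I then Set.univ else s i) := by
    ext p
    have key (i : ι) : I.piecewise p.1 p.2 i ∈ s i ↔
        p.1 i ∈ (if i ∈ I then s i else Set.univ) ∧ p.2 i ∈ (if i ∈ I then Set.univ else s i) := by
      by_cases hi : i ∈ I <;> simp [hi]
    simp only [Set.mem_preimage, Set.mem_pi, Set.mem_univ, true_implies, Set.mem_prod, key,
      forall_and]
  rw [Measure.map_apply (measurable_piecewise_prod I) (.univ_pi hs), hpre, Measure.prod_prod,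
    Measure.pi_pi, Measure.pi_pi, ← Finset.prod_mul_distrib]
  refine Finset.prod_congr rfl fun i _ => ?_
  by_cases hi : i ∈ I <;> simp [hi]

end Piecewise

section IntegralOutside

variable {ι : Type*} [Fintype ι] [DecidableEq ι] {α : ι → Type*} [∀ i, MeasurableSpace (α i)]
  (μ : ∀ i, Measure (α i)) [∀ i, IsProbabilityMeasure (μ i)]

noncomputable def integralOutside (I : Finset ι) (f : (∀ i, α i) → ℝ) (z : ∀ i, α i) : ℝ :=
  ∫ y, f (I.piecewise z y) ∂Measure.pi μ

noncomputable def hoeffdingRemainder (f : (∀ i, α i) → ℝ) (z : ∀ i, α i) : ℝ :=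
  f z - ∑ I ∈ univ.filter (fun I : Finset ι => #I < Fintype.card ι),
    (-1) ^ (Fintype.card ι - 1 - #I) * integralOutside μ I f z

variable {μ} {f : (∀ i, α i) → ℝ}

theorem integrable_integralOutside (hf : Integrable f (Measure.pi μ)) (I : Finset ι) :
    Integrable (integralOutside μ I f) (Measure.pi μ) :=
  (((measurePreserving_piecewise_prod μ I).integrable_comp hf.1).2 hf).integral_prod_left

theorem integrable_hoeffdingRemainder (hf : Integrable f (Measure.pi μ)) :
    Integrable (hoeffdingRemainder μ f) (Measure.pi μ) :=
  hf.sub (integrable_finsetSum _ fun I _ => (integrable_integralOutside hf I).const_mul _)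

theorem integralOutside_univ (f : (∀ i, α i) → ℝ) : integralOutside μ univ f = f := by
  funext z
  simp [integralOutside]

theorem setIntegral_integralOutside_inter (hf : Integrable f (Measure.pi μ)) {J : Finset ι}
    {A : Set (∀ i, α i)} (hA : MeasurableSet A) (hAJ : ∀ z y, J.piecewise z y ∈ A ↔ z ∈ A)
    (I : Finset ι) :
    ∫ z in A, integralOutside μ I f z ∂Measure.pi μ =
      ∫ z in A, integralOutside μ (I ∩ J) f z ∂Measure.pi μ := by
  set π := Measure.pi μ
  have hF (K : Finset ι) : Integrable (fun p : (∀ i, α i) × (∀ i, α i) => f (K.piecewise p.1 p.2))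
      (π.prod π) := ((measurePreserving_piecewise_prod μ K).integrable_comp hf.1).2 hf
  have hprod (K : Finset ι) : ∫ z in A, integralOutside μ K f z ∂π =
      ∫ p, (A ×ˢ Set.univ).indicator (fun p => f (K.piecewise p.1 p.2)) p ∂π.prod π := by
    rw [integral_indicator (hA.prod .univ), ← Measure.prod_restrict, Measure.restrict_univ,
      integral_prod _ ((hF K).mono_measure (Measure.prod_mono Measure.restrict_le_self le_rfl))]
    rfl
  -- After either map the integrand is `1_A z * f (z on I ∩ J, w on I \ J, y elsewhere)`.
  have hΦ₁ : MeasurePreserving (fun q : (∀ i, α i) × (∀ i, α i) × (∀ i, α i) =>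
      (J.piecewise q.1 q.2.1, q.2.2)) (π.prod (π.prod π)) (π.prod π) :=
    ((measurePreserving_piecewise_prod μ J).prod (.id π)).comp
      (measurePreserving_prodAssoc π π π).symm
  have hΦ₂ : MeasurePreserving (fun q : (∀ i, α i) × (∀ i, α i) × (∀ i, α i) =>
      (q.1, (I \ J).piecewise q.2.1 q.2.2)) (π.prod (π.prod π)) (π.prod π) :=
    (MeasurePreserving.id π).prod (measurePreserving_piecewise_prod μ (I \ J))
  rw [hprod, hprod, ← hΦ₁.integral_comp_of_aestronglyMeasurable
      ((hF I).indicator (hA.prod .univ)).1,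
    ← hΦ₂.integral_comp_of_aestronglyMeasurable ((hF _).indicator (hA.prod .univ)).1]
  congr 1
  funext q
  have hpw : I.piecewise (J.piecewise q.1 q.2.1) q.2.2 =
      (I ∩ J).piecewise q.1 ((I \ J).piecewise q.2.1 q.2.2) := by
    funext i
    simp only [Finset.piecewise, Finset.mem_inter, Finset.mem_sdiff]
    split_ifs <;> tauto
  by_cases hq : q.1 ∈ A
  · rw [Set.indicator_of_mem (by simpa [hAJ] using hq), Set.indicator_of_mem (by simpa using hq)]
    exact congrArg f hpw
  · rw [Set.indicator_of_notMem (by simpa [hAJ] using hq),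
      Set.indicator_of_notMem (by simpa using hq)]

theorem setIntegral_hoeffdingRemainder_eq_zero (hf : Integrable f (Measure.pi μ))
    {J : Finset ι} (hJ : J ≠ univ) {A : Set (∀ i, α i)} (hA : MeasurableSet A)
    (hAJ : ∀ z y, J.piecewise z y ∈ A ↔ z ∈ A) :
    ∫ z in A, hoeffdingRemainder μ f z ∂Measure.pi μ = 0 := by
  have hterm (I : Finset ι) : Integrable (fun z => (-1 : ℝ) ^ (Fintype.card ι - 1 - #I) *
      integralOutside μ I f z) (Measure.pi μ) := (integrable_integralOutside hf I).const_mul _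
  unfold hoeffdingRemainder
  rw [integral_sub hf.integrableOn
      (integrable_finsetSum _ fun I _ => hterm I).integrableOn,
    integral_finsetSum _ fun I _ => (hterm I).integrableOn,
    sum_congr rfl fun I _ => by rw [integral_const_mul,
      setIntegral_integralOutside_inter hf hA hAJ I],
    sum_card_lt_neg_one_pow_mul_inter hJ fun T => ∫ z in A, integralOutside μ T f z ∂_,
    ← univ_inter J,
    ← setIntegral_integralOutside_inter hf hA hAJ univ, integralOutside_univ, sub_self]

end IntegralOutside

theorem apply_append_split_of_perm_invariant {S : Type*} {ℓ j n : ℕ} {f : (Fin ℓ → S) → ℝ}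
    (hsymm : ∀ (σ : Equiv.Perm (Fin ℓ)) (x : Fin ℓ → S), f (x ∘ σ) = f x)
    (h : ℓ = j + n) (e : Fin j ⊕ Fin n ≃ Fin ℓ) (v : Fin ℓ → S) :
    f (fun i => Fin.append (v ∘ e ∘ Sum.inl) (v ∘ e ∘ Sum.inr) (Fin.cast h i)) = f v := by
  have : (fun i => Fin.append (v ∘ e ∘ Sum.inl) (v ∘ e ∘ Sum.inr) (Fin.cast h i)) =
      v ∘ ((finCongr h).trans (finSumFinEquiv.symm.trans e)) := by
    funext i
    simp only [Equiv.trans_apply, finCongr_apply, Function.comp_apply]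
    generalize Fin.cast h i = k
    induction k using Fin.addCases <;> simp
  rw [this, hsymm]

section HoeffdingKernel

variable {S : Type*} [MeasurableSpace S]

theorem measurePreserving_comp_sumInr (μ : Measure S)
    [IsProbabilityMeasure μ] {κ κ' ι : Type*} [Fintype κ] [Fintype κ'] [Fintype ι]
    (e : κ ⊕ κ' ≃ ι) :
    MeasurePreserving (fun y : ι → S => y ∘ e ∘ Sum.inr)
      (Measure.pi fun _ => μ) (Measure.pi fun _ => μ) :=
  (measurePreserving_snd.comp (measurePreserving_sumPiEquivProdPi fun _ => μ)).comp
    (measurePreserving_piCongrLeft (fun _ => μ) e).symm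

theorem measurable_append_cast {ℓ j n : ℕ} (h : ℓ = j + n) :
    Measurable fun p : (Fin j → S) × (Fin n → S) =>
      fun i => Fin.append p.1 p.2 (Fin.cast h i) := by
  refine measurable_pi_lambda _ fun i => ?_
  generalize Fin.cast h i = k
  induction k using Fin.addCases <;> simp only [Fin.append_left, Fin.append_right] <;> fun_prop

noncomputable def hoeffdingKernel (μ : Measure S) {ℓ : ℕ} (f : (Fin ℓ → S) → ℝ) (j : ℕ)
    (x : Fin j → S) : ℝ :=
  if h : j ≤ ℓ then
    (-1) ^ (ℓ - 1 - j) * ∫ y : Fin (ℓ - j) → S,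
      f (fun i => Fin.append x y (Fin.cast (Nat.add_sub_cancel' h).symm i))
      ∂Measure.pi fun _ => μ
  else 0

variable {μ : Measure S} {ℓ : ℕ} {f : (Fin ℓ → S) → ℝ}

theorem Measurable.hoeffdingKernel [SigmaFinite μ] (hf : Measurable f) (j : ℕ) :
    Measurable (hoeffdingKernel μ f j) := by
  unfold _root_.hoeffdingKernel
  split_ifs with h
  · exact ((hf.comp (measurable_append_cast _)).stronglyMeasurable.integral_prod_right'
      ).measurable.const_mul _
  · exact measurable_const

theorem hoeffdingKernel_comp_perm
    (hsymm : ∀ (σ : Equiv.Perm (Fin ℓ)) (x : Fin ℓ → S), f (x ∘ σ) = f x) {j : ℕ}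
    (σ : Equiv.Perm (Fin j)) (x : Fin j → S) :
    hoeffdingKernel μ f j (x ∘ σ) = hoeffdingKernel μ f j x := by
  unfold hoeffdingKernel
  split_ifs with hj
  · congr 2
    funext y
    set h := (Nat.add_sub_cancel' hj).symm
    set e := (Equiv.sumCongr σ (Equiv.refl _)).trans (finSumFinEquiv.trans (finCongr h.symm))
    convert apply_append_split_of_perm_invariant hsymm h e (fun i => Fin.append x y (Fin.cast h i))
      using 4 <;> funext m <;> simp [e]
  · rfl

theorem hoeffdingKernel_orderIsoOfFin [IsProbabilityMeasure μ] (hf : Measurable f)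
    (hsymm : ∀ (σ : Equiv.Perm (Fin ℓ)) (x : Fin ℓ → S), f (x ∘ σ) = f x)
    (I : Finset (Fin ℓ)) (z : Fin ℓ → S) :
    hoeffdingKernel μ f #I (fun m => z (I.orderIsoOfFin rfl m)) =
      (-1) ^ (ℓ - 1 - #I) * integralOutside (fun _ => μ) I f z := by
  have hI : #I ≤ ℓ := by simpa using card_le_univ I
  have hc : #Iᶜ = ℓ - #I := by simp [card_compl]
  set e := finSumEquivOfFinset rfl hc
  rw [hoeffdingKernel, dif_pos hI, integralOutside]
  congr 1
  refine ((measurePreserving_comp_sumInr μ e).integral_comp_of_aestronglyMeasurable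
    (hf.comp ((measurable_append_cast _).comp (measurable_const.prodMk measurable_id))
      ).aestronglyMeasurable).symm.trans (integral_congr_ae (ae_of_all _ fun y => ?_))
  dsimp only [Function.comp_apply, id]
  have hl : I.piecewise z y ∘ e ∘ Sum.inl = fun m => z (I.orderIsoOfFin rfl m) := by
    funext m; simp [e]
  have hr : I.piecewise z y ∘ e ∘ Sum.inr = y ∘ e ∘ Sum.inr := by
    funext m
    exact I.piecewise_eq_of_notMem _ _ (mem_compl.1 (Iᶜ.orderEmbOfFin_mem hc m))
  rw [← apply_append_split_of_perm_invariant hsymm (Nat.add_sub_cancel' hI).symm e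
    (I.piecewise z y), hl, hr]

end HoeffdingKernel

theorem stmt_15_general {Ω S : Type*} [MeasurableSpace Ω] [MeasurableSpace S]
    (P : Measure Ω) [IsProbabilityMeasure P] (μ : Measure S) [IsProbabilityMeasure μ]
    (X : ℕ → Ω → S) (hmeas : ∀ i, Measurable (X i))
    (hindep : iIndepFun (fun i : ℕ => X (i + 1)) P)
    (hident : ∀ i : ℕ, P.map (X (i + 1)) = μ)
    (ℓ : ℕ) (f : (Fin ℓ → S) → ℝ) (hf : Measurable f)
    (hsymm : ∀ (σ : Equiv.Perm (Fin ℓ)) (x : Fin ℓ → S), f (x ∘ σ) = f x)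
    (hint : Integrable (fun ω => f fun k => X ((k : ℕ) + 1) ω) P) :
    ∃ φ : (j : ℕ) → (Fin j → S) → ℝ,
      (∀ j, j < ℓ → Measurable (φ j)) ∧
      (∀ j, j < ℓ → ∀ (σ : Equiv.Perm (Fin j)) (x : Fin j → S), φ j (x ∘ σ) = φ j x) ∧
      (∀ (j : ℕ) (hj : j < ℓ) (x : Fin j → S),
        φ j x = (-1 : ℝ) ^ (ℓ - 1 - j) *
          ∫ y : Fin (ℓ - j) → S,
            f (fun i => Fin.append x y (Fin.cast (Nat.add_sub_cancel' hj.le).symm i))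
            ∂Measure.pi fun _ : Fin (ℓ - j) => μ) ∧
      (∀ J : Finset (Fin ℓ), J ≠ Finset.univ →
        P[(fun ω => f (fun k => X ((k : ℕ) + 1) ω) -
            ∑ I ∈ Finset.univ.filter (fun I : Finset (Fin ℓ) => I.card < ℓ),
              φ I.card fun m => X (((I.orderIsoOfFin rfl m).val : ℕ) + 1) ω) |
          MeasurableSpace.comap
            (fun ω => fun j : {x : Fin ℓ // x ∈ J} => X (((j : Fin ℓ) : ℕ) + 1) ω)
            inferInstance]
          =ᵐ[P] 0) := by
  set Y : Ω → Fin ℓ → S := fun ω k => X (k + 1) ω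
  have hY : Measurable Y := measurable_pi_lambda _ fun k => hmeas _
  have hlaw : P.map Y = Measure.pi fun _ => μ := by
    rw [(hindep.precomp Fin.val_injective).map_fun_eq_pi_map fun k => (hmeas _).aemeasurable]
    simp only [hident]
  have hfπ : Integrable f (Measure.pi fun _ => μ) := by
    rw [← hlaw]
    exact (integrable_map_measure hf.aestronglyMeasurable hY.aemeasurable).2 hint
  refine ⟨hoeffdingKernel μ f, fun j _ => hf.hoeffdingKernel j,
    fun j _ => hoeffdingKernel_comp_perm hsymm, fun j hj x => dif_pos hj.le, fun J hJ => ?_⟩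
  have hremainder : (fun z => f z - ∑ I ∈ univ.filter (fun I : Finset (Fin ℓ) => #I < ℓ),
      hoeffdingKernel μ f #I fun m => z (I.orderIsoOfFin rfl m)) =
      hoeffdingRemainder (fun _ => μ) f := by
    funext z
    simp only [hoeffdingRemainder, Fintype.card_fin, hoeffdingKernel_orderIsoOfFin hf hsymm]
  have hW : Measurable fun (z : Fin ℓ → S) (j : {x : Fin ℓ // x ∈ J}) => z j := by fun_prop
  have hcondExp := condExp_comp_eq_zero_of_setIntegral_eq_zero hY hlaw hW
    (integrable_hoeffdingRemainder hfπ) fun t ht =>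
      setIntegral_hoeffdingRemainder_eq_zero hfπ hJ (hW ht) fun z y => by
        simp [Finset.piecewise]
  rw [← hremainder] at hcondExp
  exact hcondExp

/-- Hoeffding-type decomposition: let `(X_i)_{i ≥ 1}` be an i.i.d. sequence with common law
`μ` on a Polish space `S`, `ℓ ≥ 2`, and let `f : S^ℓ → ℝ` be Borel measurable, symmetric,
with `E|f(X_1, …, X_ℓ)| < ∞`. Then there exist Borel measurable functions
`φ_0, …, φ_{ℓ-1}` with `φ_j : S^j → ℝ` symmetric, given by the explicit formula
`φ_j(x_1, …, x_j) = (-1)^{ℓ-1-j} ∫ f(x_1, …, x_ℓ) dμ(x_{j+1}) ⋯ dμ(x_ℓ)`, such that for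
every proper subset `J ⊊ {1, …, ℓ}`,
`E[f(X_1,…,X_ℓ) − Σ_{k<ℓ} Σ_{|I|=k} φ_k(X_I) | σ(X_j : j ∈ J)] = 0` a.s. -/
theorem stmt_15 {Ω S : Type*} [MeasurableSpace Ω] [MeasurableSpace S]
    [TopologicalSpace S] [PolishSpace S] [BorelSpace S]
    (P : Measure Ω) [IsProbabilityMeasure P] (μ : Measure S) [IsProbabilityMeasure μ]
    (X : ℕ → Ω → S) (hmeas : ∀ i, Measurable (X i))
    (hindep : iIndepFun (fun i : ℕ => X (i + 1)) P)
    (hident : ∀ i : ℕ, P.map (X (i + 1)) = μ)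
    (ℓ : ℕ) (hℓ : 2 ≤ ℓ) (f : (Fin ℓ → S) → ℝ) (hf : Measurable f)
    (hsymm : ∀ (σ : Equiv.Perm (Fin ℓ)) (x : Fin ℓ → S), f (x ∘ σ) = f x)
    (hint : Integrable (fun ω => f fun k => X ((k : ℕ) + 1) ω) P) :
    ∃ φ : (j : ℕ) → (Fin j → S) → ℝ,
      (∀ j, j < ℓ → Measurable (φ j)) ∧
      (∀ j, j < ℓ → ∀ (σ : Equiv.Perm (Fin j)) (x : Fin j → S), φ j (x ∘ σ) = φ j x) ∧
      (∀ (j : ℕ) (hj : j < ℓ) (x : Fin j → S),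
        φ j x = (-1 : ℝ) ^ (ℓ - 1 - j) *
          ∫ y : Fin (ℓ - j) → S,
            f (fun i => Fin.append x y (Fin.cast (Nat.add_sub_cancel' hj.le).symm i))
            ∂Measure.pi fun _ : Fin (ℓ - j) => μ) ∧
      (∀ J : Finset (Fin ℓ), J ≠ Finset.univ →
        P[(fun ω => f (fun k => X ((k : ℕ) + 1) ω) -
            ∑ I ∈ Finset.univ.filter (fun I : Finset (Fin ℓ) => I.card < ℓ),
              φ I.card fun m => X (((I.orderIsoOfFin rfl m).val : ℕ) + 1) ω) |
          MeasurableSpace.comap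
            (fun ω => fun j : {x : Fin ℓ // x ∈ J} => X (((j : Fin ℓ) : ℕ) + 1) ω)
            inferInstance]
          =ᵐ[P] 0) :=
  stmt_15_general P μ X hmeas hindep hident ℓ f hf hsymm hint
end

section
/- There is a constant c, depending only on ℓ, such that Σ ℙ[f(X_{i1}, …, X_{iℓ}) > (i1² + ⋯ + iℓ²)^{ℓ/2}] ≤ c · E[f(X1, …, Xℓ)], the sum running over all ℓ-tuples (i1, …, iℓ) of pairwise distinct positive integers; in particular this series converges. -/
/-!
Every tuple `(X_{i₁}, …, X_{i_ℓ})` with distinct indices has law `μ^⊗ℓ`, so the series equals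
`E[N(f(X_1, …, X_ℓ))]`, where `N(t)` counts the admissible index tuples with `ρ_i^ℓ < t`. Each
coordinate of such a tuple is at most `ρ_i`, hence at most the largest integer `m` with `m^ℓ < t`;
so `N(t) ≤ m^ℓ ≤ t`, and `c = 1` works.
-/

open MeasureTheory ProbabilityTheory

universe u v

/-- `ρ_i = (i₁² + ⋯ + i_ℓ²)^{1/2}`, the Euclidean norm of the tuple of indices. -/
noncomputable def rhoTuple (ℓ : ℕ) (c : Fin ℓ → ℕ) : ℝ :=
  Real.sqrt (∑ k, ((c k : ℝ)) ^ 2)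

open scoped ENNReal

theorem ProbabilityTheory.iIndepFun.map_comp_eq_pi {Ω ι κ S : Type*} [MeasurableSpace Ω]
    [MeasurableSpace S] [Fintype κ] {P : Measure Ω} {μ : Measure S} {Y : ι → Ω → S}
    (hY : ∀ i, Measurable (Y i)) (hind : iIndepFun Y P) (hlaw : ∀ i, P.map (Y i) = μ)
    {τ : κ → ι} (hτ : τ.Injective) :
    P.map (fun ω k => Y (τ k) ω) = Measure.pi fun _ => μ := by
  rw [(hind.precomp hτ).map_fun_eq_pi_map fun k => (hY (τ k)).aemeasurable]
  simp only [hlaw]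

theorem ProbabilityTheory.iIndepFun.map_comp_eq_pi_of_pos {Ω κ S : Type*} [MeasurableSpace Ω]
    [MeasurableSpace S] [Fintype κ] {P : Measure Ω} {μ : Measure S} {X : ℕ → Ω → S}
    (hX : ∀ i, Measurable (X i)) (hind : iIndepFun (fun i => X (i + 1)) P)
    (hlaw : ∀ i, P.map (X (i + 1)) = μ) {c : κ → ℕ} (hc : c.Injective) (hpos : ∀ k, 1 ≤ c k) :
    P.map (fun ω k => X (c k) ω) = Measure.pi fun _ => μ := by
  have shift : (fun ω k => X (c k) ω) = fun ω k => X (c k - 1 + 1) ω := by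
    simp only [Nat.sub_add_cancel (hpos _)]
  rw [shift]
  refine hind.map_comp_eq_pi (fun i => hX (i + 1)) hlaw fun a b hab => hc ?_
  have := hpos a; have := hpos b; omega

theorem tsum_measure_lt_le_lintegral {E ι : Type*} [MeasurableSpace E] [Countable ι]
    (ν : Measure E) {g : E → ℝ} (hg : Measurable g) (r : ι → ℝ)
    (hr : ∀ t, ∑' i, {i | r i < t}.indicator 1 i ≤ ENNReal.ofReal t) :
    ∑' i, ν {x | r i < g x} ≤ ∫⁻ x, ENNReal.ofReal (g x) ∂ν := by
  have hmeas : ∀ i, MeasurableSet {x | r i < g x} := fun i => measurableSet_lt measurable_const hg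
  calc ∑' i, ν {x | r i < g x}
      = ∑' i, ∫⁻ x, {x | r i < g x}.indicator 1 x ∂ν :=
        tsum_congr fun i => (lintegral_indicator_one (hmeas i)).symm
    _ = ∫⁻ x, ∑' i, {i | r i < g x}.indicator 1 i ∂ν :=
        (lintegral_tsum fun i => (measurable_const.indicator (hmeas i)).aemeasurable).symm
    _ ≤ ∫⁻ x, ENNReal.ofReal (g x) ∂ν := lintegral_mono fun x => hr (g x)

theorem le_rhoTuple {ℓ : ℕ} (c : Fin ℓ → ℕ) (k : Fin ℓ) : (c k : ℝ) ≤ rhoTuple ℓ c :=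
  Real.le_sqrt_of_sq_le <|
    Finset.single_le_sum (f := fun k => (c k : ℝ) ^ 2) (fun _ _ => sq_nonneg _) (Finset.mem_univ k)

theorem tsum_indicator_rhoTuple_pow_lt_le {ℓ : ℕ} (hℓ : ℓ ≠ 0) (s : Set (Fin ℓ → ℕ))
    (hs : ∀ c ∈ s, ∀ k, 1 ≤ c k) (t : ℝ) :
    ∑' c : s, {c : s | rhoTuple ℓ c ^ ℓ < t}.indicator 1 c ≤ ENNReal.ofReal t := by
  classical
  set m := Nat.findGreatest (fun n : ℕ => (n : ℝ) ^ ℓ < t) ⌊t⌋₊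
  have le_m : ∀ n : ℕ, 1 ≤ n → (n : ℝ) ^ ℓ < t → n ≤ m := fun n hn h =>
    Nat.le_findGreatest (Nat.le_floor ((le_self_pow₀ (by exact_mod_cast hn) hℓ).trans h.le)) h
  have m_pow : (m : ℝ≥0∞) ^ ℓ ≤ ENNReal.ofReal t := by
    rcases eq_or_ne m 0 with h | h
    · simp [h, hℓ]
    · rw [← ENNReal.ofReal_natCast, ← ENNReal.ofReal_pow (Nat.cast_nonneg _)]
      exact ENNReal.ofReal_le_ofReal (Nat.findGreatest_of_ne_zero rfl h).le
  let box := Fintype.piFinset fun _ : Fin ℓ => Finset.Icc 1 m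
  calc ∑' c : s, {c : s | rhoTuple ℓ c ^ ℓ < t}.indicator 1 c
      ≤ ∑' c : s, (box : Set (Fin ℓ → ℕ)).indicator 1 c.1 := by
        refine ENNReal.tsum_le_tsum fun c => Set.indicator_apply_le' (fun hc => ?_) fun _ => zero_le
        have c_mem : c.1 ∈ box := Fintype.mem_piFinset.2 fun k =>
          Finset.mem_Icc.2 ⟨hs c c.2 k, le_m _ (hs c c.2 k)
            ((pow_le_pow_left₀ (Nat.cast_nonneg _) (le_rhoTuple c.1 k) ℓ).trans_lt hc)⟩
        rw [Set.indicator_of_mem (Finset.mem_coe.2 c_mem)]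
        rfl
    _ ≤ ∑' c, (box : Set (Fin ℓ → ℕ)).indicator 1 c :=
        ENNReal.tsum_comp_le_tsum_of_injective Subtype.val_injective _
    _ = (m : ℝ≥0∞) ^ ℓ := by
        rw [tsum_eq_sum fun c hc => Set.indicator_of_notMem hc _,
          Finset.sum_congr rfl fun c hc => Set.indicator_of_mem (Finset.mem_coe.2 hc) _]
        simp [box]
    _ ≤ ENNReal.ofReal t := m_pow

/-- There is a constant `c`, depending only on `ℓ ≥ 1`, such that for every i.i.d. sequence
`(X_i)_{i ≥ 1}` with values in a Polish space `S` and every Borel measurable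
`f : S^ℓ → [0,∞)` with `E f(X_1, …, X_ℓ) < ∞`, the series
`Σ ℙ[f(X_{i₁}, …, X_{i_ℓ}) > (i₁² + ⋯ + i_ℓ²)^{ℓ/2}]`, summed over all `ℓ`-tuples of
pairwise distinct positive integers, is at most `c · E[f(X_1, …, X_ℓ)]`; in particular this
series converges. -/
theorem stmt_18 (ℓ : ℕ) (hℓ : 1 ≤ ℓ) :
    ∃ c : ℝ, ∀ (Ω : Type u) (S : Type v)
      [MeasurableSpace Ω] [MeasurableSpace S]
      [TopologicalSpace S] [PolishSpace S] [BorelSpace S]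
      (P : Measure Ω) [IsProbabilityMeasure P] (μ : Measure S)
      (X : ℕ → Ω → S), (∀ i, Measurable (X i)) →
      iIndepFun (fun i : ℕ => X (i + 1)) P →
      (∀ i : ℕ, P.map (X (i + 1)) = μ) →
      ∀ f : (Fin ℓ → S) → ℝ, Measurable f → (∀ x, 0 ≤ f x) →
      Integrable (fun ω => f fun k => X ((k : ℕ) + 1) ω) P →
      (∑' i : {c : Fin ℓ → ℕ // Function.Injective c ∧ ∀ k, 1 ≤ c k},
          P {ω | rhoTuple ℓ i.1 ^ ℓ < f fun k => X (i.1 k) ω})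
        ≤ ENNReal.ofReal (c * ∫ ω, f (fun k => X ((k : ℕ) + 1) ω) ∂P) ∧
      (∑' i : {c : Fin ℓ → ℕ // Function.Injective c ∧ ∀ k, 1 ≤ c k},
          P {ω | rhoTuple ℓ i.1 ^ ℓ < f fun k => X (i.1 k) ω}) ≠ ⊤ := by
  refine ⟨1, fun Ω S _ _ _ _ _ P _ μ X hX hind hlaw f hf hf0 hfint => ?_⟩
  have : IsProbabilityMeasure μ := hlaw 0 ▸ Measure.isProbabilityMeasure_map (hX 1).aemeasurable
  have tuple_measurable (c : Fin ℓ → ℕ) : Measurable fun ω k => X (c k) ω :=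
    measurable_pi_lambda _ fun k => hX (c k)
  have sum_le : (∑' i : {c : Fin ℓ → ℕ // Function.Injective c ∧ ∀ k, 1 ≤ c k},
      P {ω | rhoTuple ℓ i.1 ^ ℓ < f fun k => X (i.1 k) ω})
        ≤ ENNReal.ofReal (∫ ω, f (fun k => X ((k : ℕ) + 1) ω) ∂P) := calc
    _ = ∑' i : {c : Fin ℓ → ℕ // Function.Injective c ∧ ∀ k, 1 ≤ c k},
          (Measure.pi fun _ => μ) {x | rhoTuple ℓ i.1 ^ ℓ < f x} := tsum_congr fun i => by
        rw [← hind.map_comp_eq_pi_of_pos hX hlaw i.2.1 i.2.2,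
          Measure.map_apply (tuple_measurable i.1) (measurableSet_lt measurable_const hf)]
        rfl
    _ ≤ ∫⁻ x, ENNReal.ofReal (f x) ∂(Measure.pi fun _ => μ) :=
        tsum_measure_lt_le_lintegral _ hf _ <| tsum_indicator_rhoTuple_pow_lt_le (by omega)
          {c | c.Injective ∧ ∀ k, 1 ≤ c k} fun _ hc => hc.2
    _ = ∫⁻ ω, ENNReal.ofReal (f fun k => X ((k : ℕ) + 1) ω) ∂P := by
        rw [← hind.map_comp_eq_pi_of_pos hX hlaw (c := fun k : Fin ℓ => (k : ℕ) + 1)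
          (fun a b hab => Fin.ext (by simpa using hab)) fun _ => le_add_self,
          lintegral_map hf.ennreal_ofReal (tuple_measurable _)]
    _ = _ := (ofReal_integral_eq_lintegral_ofReal hfint (ae_of_all _ fun _ => hf0 _)).symm
  exact ⟨by rwa [one_mul], ne_top_of_le_ne_top ENNReal.ofReal_ne_top sum_le⟩
end
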